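/- arXiv:math/0405595 — 4 statements merged into one kernel-verified Lean document; each statement's English description precedes it below -/
import Mathlib

section
/- For every N ∈ ℕ and every N×N density matrix ρ, the function p_ρ is real-valued, nonnegative on ℝ × [0,π], and satisfies ∫_0^π ∫_ℝ p_ρ(x,φ) dx dφ = 1 (i.e. p_ρ is a probability density on ℝ × [0,π]). -/
open MeasureTheory ComplexOrder

/-- The physicists' Hermite polynomials, defined by `H₀ = 1`,
`H_{k+1}(x) = 2x H_k(x) − H_k'(x)`. -/
noncomputable def physHermite : ℕ → Polynomial ℝ
  | 0 => 1
  | n + 1 => 2 * Polynomial.X * physHermite n - Polynomial.derivative (physHermite n)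

/-- Normalizing constant `c_k = (√π 2^k k!)^{-1/2}` making `∫ ψ_k² = 1`. -/
noncomputable def hermiteConst (k : ℕ) : ℝ :=
  1 / Real.sqrt (Real.sqrt Real.pi * 2 ^ k * (k.factorial : ℝ))

/-- The `k`-th Hermite function `ψ_k(x) = c_k H_k(x) e^{-x²/2}`. -/
noncomputable def hermiteFun (k : ℕ) (x : ℝ) : ℝ :=
  hermiteConst k * (physHermite k).eval x * Real.exp (-(x ^ 2) / 2)

/-- `p_A(x,φ) = (1/π) Σ_{j,k} A_{j,k} ψ_k(x) ψ_j(x) e^{−i(j−k)φ}`. -/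
noncomputable def pFun {N : ℕ} (A : Matrix (Fin N) (Fin N) ℂ) (x φ : ℝ) : ℂ :=
  ((1 / Real.pi : ℝ) : ℂ) * ∑ j : Fin N, ∑ k : Fin N,
    A j k * ((hermiteFun k x : ℝ) : ℂ) * ((hermiteFun j x : ℝ) : ℂ) *
      Complex.exp (-Complex.I * ((((j : ℕ) : ℂ)) - (((k : ℕ) : ℂ))) * (φ : ℂ))

/-- A density matrix: positive semidefinite with trace one. -/
def IsDensityMatrix {N : ℕ} (ρ : Matrix (Fin N) (Fin N) ℂ) : Prop :=
  ρ.PosSemidef ∧ ρ.trace = 1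

/-- The trace norm of a Hermitian matrix: the sum of the absolute values of
its eigenvalues. -/
noncomputable def traceNorm {N : ℕ} (A : Matrix (Fin N) (Fin N) ℂ)
    (hA : A.IsHermitian) : ℝ :=
  ∑ i, |hA.eigenvalues i|

section Aux

open Polynomial Real Filter

lemma physHermite_succ' (n : ℕ) :
    physHermite (n + 1) = 2 * X * physHermite n - derivative (physHermite n) := rfl

lemma physHermite_zero' : physHermite 0 = 1 := rfl

lemma physHermite_deriv (n : ℕ) :
    derivative (physHermite (n + 1)) = ((2 * n + 2 : ℕ) : Polynomial ℝ) * physHermite n := by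
  induction n with
  | zero =>
    rw [physHermite_succ', physHermite_zero']
    simp
  | succ n ih =>
    rw [physHermite_succ' (n+1), derivative_sub, derivative_mul, derivative_mul, derivative_X,
      derivative_ofNat, ih, derivative_mul]
    have h2 : physHermite (n + 1) = 2 * X * physHermite n - derivative (physHermite n) :=
      physHermite_succ' n
    have hd : derivative ((2 * n + 2 : ℕ) : Polynomial ℝ) = 0 := derivative_natCast
    rw [hd]
    push_cast
    linear_combination (-(2*(n:Polynomial ℝ)+2)) * h2

lemma physHermite_comp_neg (n : ℕ) :
    (physHermite n).comp (-X) = (-1) ^ n * physHermite n := by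
  induction n with
  | zero => simp [physHermite_zero']
  | succ n ih =>
    have hd : (derivative (physHermite n)).comp (-X)
        = (-1) ^ (n+1) * derivative (physHermite n) := by
      have h := congrArg derivative ih
      rw [derivative_comp] at h
      simp only [derivative_neg, derivative_X, derivative_mul, derivative_pow] at h
      have : -((derivative (physHermite n)).comp (-X)) = (-1) ^ n * derivative (physHermite n) := by
        simpa using h
      rw [pow_succ]
      linear_combination -this
    rw [physHermite_succ', sub_comp, mul_comp, mul_comp, X_comp, ofNat_comp, ih, hd]
    ring

lemma integrable_pow_gauss (n : ℕ) : Integrable fun x : ℝ => x ^ n * Real.exp (-x ^ 2) := by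
  have h := integrable_rpow_mul_exp_neg_mul_sq (b := 1) one_pos (s := n)
    (by exact_mod_cast neg_one_lt_zero.trans_le (Nat.cast_nonneg n) : (-1:ℝ) < n)
  simpa [Real.rpow_natCast] using h

lemma integrable_poly_gauss (P : Polynomial ℝ) :
    Integrable fun x : ℝ => P.eval x * Real.exp (-x ^ 2) := by
  have : (fun x : ℝ => P.eval x * Real.exp (-x ^ 2)) =
      fun x : ℝ => ∑ i ∈ Finset.range (P.natDegree + 1),
        P.coeff i * (x ^ i * Real.exp (-x ^ 2)) := by
    funext x
    rw [Polynomial.eval_eq_sum_range, Finset.sum_mul]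
    simp [mul_assoc]
  rw [this]
  exact integrable_finset_sum _ fun i _ => (integrable_pow_gauss i).const_mul _

lemma tendsto_pow_gauss_atTop (n : ℕ) :
    Tendsto (fun x : ℝ => x ^ n * Real.exp (-x ^ 2)) atTop (nhds 0) := by
  apply squeeze_zero' (g := fun x : ℝ => x ^ n * Real.exp (-x))
  · filter_upwards [eventually_ge_atTop (0:ℝ)] with x hx
    positivity
  · filter_upwards [eventually_ge_atTop (1:ℝ)] with x hx
    have : Real.exp (-x ^ 2) ≤ Real.exp (-x) := by
      apply Real.exp_le_exp.2
      nlinarith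
    have hxn : (0:ℝ) ≤ x ^ n := by positivity
    nlinarith [Real.exp_pos (-x^2), Real.exp_pos (-x)]
  · exact tendsto_pow_mul_exp_neg_atTop_nhds_zero n

lemma tendsto_poly_gauss_atTop (P : Polynomial ℝ) :
    Tendsto (fun x : ℝ => P.eval x * Real.exp (-x ^ 2)) atTop (nhds 0) := by
  have heq : (fun x : ℝ => P.eval x * Real.exp (-x ^ 2)) =
      fun x : ℝ => ∑ i ∈ Finset.range (P.natDegree + 1),
        P.coeff i * (x ^ i * Real.exp (-x ^ 2)) := by
    funext x
    rw [Polynomial.eval_eq_sum_range, Finset.sum_mul]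
    simp [mul_assoc]
  rw [heq]
  have : Tendsto (fun x : ℝ => ∑ i ∈ Finset.range (P.natDegree + 1),
      P.coeff i * (x ^ i * Real.exp (-x ^ 2))) atTop
      (nhds (∑ i ∈ Finset.range (P.natDegree + 1), P.coeff i * 0)) :=
    tendsto_finset_sum _ fun i _ => ((tendsto_pow_gauss_atTop i).const_mul _)
  simpa using this

lemma tendsto_poly_gauss_atBot (P : Polynomial ℝ) :
    Tendsto (fun x : ℝ => P.eval x * Real.exp (-x ^ 2)) atBot (nhds 0) := by
  have h := (tendsto_poly_gauss_atTop (P.comp (-X))).comp tendsto_neg_atBot_atTop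
  have heq : ((fun x : ℝ => (P.comp (-X)).eval x * Real.exp (-x ^ 2)) ∘ fun x : ℝ => -x) =
      fun x : ℝ => P.eval x * Real.exp (-x ^ 2) := by
    funext x
    simp [Function.comp, Polynomial.eval_comp]
  rwa [heq] at h

lemma integral_deriv_poly_gauss (R : Polynomial ℝ) :
    ∫ x : ℝ, (derivative R - 2 * X * R).eval x * Real.exp (-x ^ 2) = 0 := by
  have h1 : ∀ x : ℝ, HasDerivAt (fun y : ℝ => R.eval y * Real.exp (-y ^ 2))
      ((derivative R - 2 * X * R).eval x * Real.exp (-x ^ 2)) x := by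
    intro x
    have hp : HasDerivAt (fun y : ℝ => R.eval y) ((derivative R).eval x) x := R.hasDerivAt x
    have hq : HasDerivAt (fun y : ℝ => -y ^ 2) (-(2 * x)) x := by
      simpa using (hasDerivAt_pow 2 x).fun_neg
    have he := hq.exp
    have := hp.fun_mul he
    refine this.congr_deriv ?_
    simp only [Polynomial.eval_sub, Polynomial.eval_mul, Polynomial.eval_ofNat,
      Polynomial.eval_X]
    ring
  have h2 := integrable_poly_gauss (derivative R - 2 * X * R)
  have := MeasureTheory.integral_of_hasDerivAt_of_tendsto h1 h2
    (tendsto_poly_gauss_atBot R) (tendsto_poly_gauss_atTop R)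
  simpa using this

lemma physHermite_sq_gauss (n : ℕ) :
    ∫ x : ℝ, (physHermite n).eval x ^ 2 * Real.exp (-x ^ 2)
      = Real.sqrt Real.pi * 2 ^ n * n.factorial := by
  induction n with
  | zero =>
    rw [physHermite_zero']
    simpa using integral_gaussian 1
  | succ n ih =>
    have key := integral_deriv_poly_gauss (physHermite (n + 1) * physHermite n)
    have halg : derivative (physHermite (n + 1) * physHermite n)
        - 2 * X * (physHermite (n + 1) * physHermite n)
        = ((2 * n + 2 : ℕ) : Polynomial ℝ) * physHermite n ^ 2 - physHermite (n + 1) ^ 2 := by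
      rw [derivative_mul, physHermite_deriv n]
      have h2 := physHermite_succ' n
      linear_combination (physHermite (n + 1) : Polynomial ℝ) * h2
    rw [halg] at key
    have i1 : Integrable fun x : ℝ => (physHermite n ^ 2).eval x * Real.exp (-x ^ 2) :=
      integrable_poly_gauss _
    have i2 : Integrable fun x : ℝ => (physHermite (n + 1) ^ 2).eval x * Real.exp (-x ^ 2) :=
      integrable_poly_gauss _
    have key2 : ∫ x : ℝ, ((2 * (n : ℝ) + 2) * ((physHermite n ^ 2).eval x * Real.exp (-x ^ 2))
        - (physHermite (n + 1) ^ 2).eval x * Real.exp (-x ^ 2)) = 0 := by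
      rw [← key]
      congr 1
      funext x
      simp only [Polynomial.eval_sub, Polynomial.eval_mul, Polynomial.eval_natCast]
      push_cast
      ring
    rw [integral_sub (i1.const_mul _) i2, MeasureTheory.integral_const_mul] at key2
    simp only [Polynomial.eval_pow] at key2
    rw [ih] at key2
    have : ∫ x : ℝ, (physHermite (n + 1)).eval x ^ 2 * Real.exp (-x ^ 2)
        = (2 * (n : ℝ) + 2) * (Real.sqrt Real.pi * 2 ^ n * n.factorial) := by linarith
    rw [this]
    push_cast [Nat.factorial_succ]
    ring

lemma hermiteFun_mul (j k : ℕ) (x : ℝ) :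
    hermiteFun j x * hermiteFun k x
      = (hermiteConst j * hermiteConst k) *
        ((physHermite j * physHermite k).eval x * Real.exp (-x ^ 2)) := by
  have he : Real.exp (-(x^2)/2) * Real.exp (-(x^2)/2) = Real.exp (-x^2) := by
    rw [← Real.exp_add]; norm_num
  unfold hermiteFun
  rw [Polynomial.eval_mul]
  linear_combination (hermiteConst j * (physHermite j).eval x * (hermiteConst k *
    (physHermite k).eval x)) * he

lemma integrable_hermiteFun_mul (j k : ℕ) :
    Integrable fun x : ℝ => hermiteFun j x * hermiteFun k x := by
  simp_rw [hermiteFun_mul]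
  exact (integrable_poly_gauss _).const_mul _

lemma integral_hermiteFun_self (k : ℕ) :
    ∫ x : ℝ, hermiteFun k x * hermiteFun k x = 1 := by
  simp_rw [hermiteFun_mul, Polynomial.eval_mul, ← pow_two]
  rw [MeasureTheory.integral_const_mul, physHermite_sq_gauss]
  unfold hermiteConst
  have hA : (0:ℝ) < Real.sqrt Real.pi * 2 ^ k * (k.factorial : ℝ) := by
    have h1 : (0:ℝ) < Real.sqrt Real.pi := Real.sqrt_pos.2 Real.pi_pos
    have h2 : (0:ℝ) < (k.factorial : ℝ) := by exact_mod_cast k.factorial_pos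
    positivity
  rw [div_pow, one_pow, Real.sq_sqrt hA.le]
  exact one_div_mul_cancel hA.ne'

lemma hermiteFun_neg (k : ℕ) (x : ℝ) :
    hermiteFun k (-x) = (-1) ^ k * hermiteFun k x := by
  have h := congrArg (Polynomial.eval x) (physHermite_comp_neg k)
  simp only [Polynomial.eval_comp, Polynomial.eval_neg, Polynomial.eval_X,
    Polynomial.eval_mul, Polynomial.eval_pow, Polynomial.eval_one] at h
  unfold hermiteFun
  rw [h, neg_sq]
  ring

lemma integral_hermiteFun_mul_odd (j k : ℕ) (h : ¬ Even (j + k)) :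
    ∫ x : ℝ, hermiteFun j x * hermiteFun k x = 0 := by
  have h1 : ∫ x : ℝ, hermiteFun j (-x) * hermiteFun k (-x)
      = ∫ x : ℝ, hermiteFun j x * hermiteFun k x :=
    MeasureTheory.integral_neg_eq_self (fun x => hermiteFun j x * hermiteFun k x) volume
  have h2 : ∀ x : ℝ, hermiteFun j (-x) * hermiteFun k (-x)
      = -(hermiteFun j x * hermiteFun k x) := by
    intro x
    rw [hermiteFun_neg, hermiteFun_neg]
    have hodd : Odd (j + k) := Nat.not_even_iff_odd.mp h
    have hpow : ((-1:ℝ)) ^ j * (-1) ^ k = -1 := by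
      rw [← pow_add]; exact hodd.neg_one_pow
    calc (-1:ℝ) ^ j * hermiteFun j x * ((-1) ^ k * hermiteFun k x)
        = ((-1:ℝ) ^ j * (-1) ^ k) * (hermiteFun j x * hermiteFun k x) := by ring
      _ = -(hermiteFun j x * hermiteFun k x) := by rw [hpow]; ring
  have h3 : ∫ x : ℝ, hermiteFun j (-x) * hermiteFun k (-x)
      = -∫ x : ℝ, hermiteFun j x * hermiteFun k x := by
    simp_rw [h2]
    exact MeasureTheory.integral_neg _
  linarith

end Aux

section Phi

lemma intervalIntegral_cexp_even (m : ℤ) (hm : m ≠ 0) (hme : Even m) :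
    ∫ φ in (0:ℝ)..Real.pi, Complex.exp (-Complex.I * (m : ℂ) * (φ : ℂ)) = 0 := by
  have hc : (-Complex.I * (m : ℂ)) ≠ 0 := by
    apply mul_ne_zero (neg_ne_zero.2 Complex.I_ne_zero)
    exact_mod_cast hm
  have h := integral_exp_mul_complex (a := (0:ℝ)) (b := Real.pi) hc
  have heq : (fun φ : ℝ => Complex.exp (-Complex.I * (m : ℂ) * (φ : ℂ)))
      = fun φ : ℝ => Complex.exp ((-Complex.I * (m : ℂ)) * (φ : ℂ)) := by
    funext φ; ring_nf
  rw [heq, h]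
  obtain ⟨t, ht⟩ := hme
  have h1 : Complex.exp (-Complex.I * (m : ℂ) * (Real.pi : ℂ)) = 1 := by
    have h2 := Complex.exp_int_mul_two_pi_mul_I (-t)
    rw [← h2]
    congr 1
    push_cast [ht]
    ring
  rw [h1]
  simp

end Phi

/-- for every `N` and every `N×N` density matrix `ρ`, the function
`p_ρ` is real-valued and nonnegative on `ℝ × [0,π]`, and
`∫_0^π ∫_ℝ p_ρ(x,φ) dx dφ = 1`. -/
theorem pFun_isProbabilityDensity (N : ℕ) (ρ : Matrix (Fin N) (Fin N) ℂ)
    (hρ : IsDensityMatrix ρ) :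
    (∀ x φ : ℝ, φ ∈ Set.Icc 0 Real.pi →
      (pFun ρ x φ).im = 0 ∧ 0 ≤ (pFun ρ x φ).re) ∧
    (∫ φ in (0:ℝ)..Real.pi, ∫ x : ℝ, (pFun ρ x φ).re) = 1 := by
  obtain ⟨hpsd, htr⟩ := hρ
  constructor
  · -- pointwise claims
    intro x φ _
    set w : Fin N → ℂ := fun k => ((hermiteFun k x : ℝ) : ℂ) * Complex.exp (Complex.I * k * φ)
      with hw
    have hsum : dotProduct (star w) (ρ.mulVec w) = ∑ j : Fin N, ∑ k : Fin N,
        ρ j k * ((hermiteFun k x : ℝ) : ℂ) * ((hermiteFun j x : ℝ) : ℂ) *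
          Complex.exp (-Complex.I * ((((j : ℕ) : ℂ)) - (((k : ℕ) : ℂ))) * (φ : ℂ)) := by
      simp only [dotProduct, Matrix.mulVec, Pi.star_apply, Finset.mul_sum]
      refine Finset.sum_congr rfl fun j _ => Finset.sum_congr rfl fun k _ => ?_
      simp only [hw, star_mul', Complex.star_def, Complex.conj_ofReal, ← Complex.exp_conj,
        map_mul, Complex.conj_I, Complex.conj_natCast]
      rw [show -Complex.I * ((((j : ℕ) : ℂ)) - (((k : ℕ) : ℂ))) * (φ : ℂ)
        = (-Complex.I * j * φ) + (Complex.I * k * φ) by ring, Complex.exp_add]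
      ring
    have hle := hpsd.dotProduct_mulVec_nonneg w
    rw [hsum] at hle
    rw [Complex.le_def] at hle
    obtain ⟨hre, him⟩ := hle
    simp only [Complex.zero_re, Complex.zero_im] at hre him
    have hp : pFun ρ x φ = ((1 / Real.pi : ℝ) : ℂ) * ∑ j : Fin N, ∑ k : Fin N,
        ρ j k * ((hermiteFun k x : ℝ) : ℂ) * ((hermiteFun j x : ℝ) : ℂ) *
          Complex.exp (-Complex.I * ((((j : ℕ) : ℂ)) - (((k : ℕ) : ℂ))) * (φ : ℂ)) := rfl
    constructor
    · rw [hp, Complex.mul_im, Complex.ofReal_im, Complex.ofReal_re, ← him]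
      ring
    · rw [hp, Complex.mul_re]
      simp only [Complex.ofReal_re, Complex.ofReal_im, zero_mul, sub_zero]
      have : (0:ℝ) ≤ 1 / Real.pi := by positivity
      exact mul_nonneg this hre
  · -- the integral
    have hxint : ∀ (φ : ℝ) (j k : Fin N), Integrable (fun x : ℝ =>
        ρ j k * ((hermiteFun k x : ℝ) : ℂ) * ((hermiteFun j x : ℝ) : ℂ) *
          Complex.exp (-Complex.I * ((((j : ℕ) : ℂ)) - (((k : ℕ) : ℂ))) * (φ : ℂ))) := by
      intro φ j k
      have heq : (fun x : ℝ =>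
          ρ j k * ((hermiteFun k x : ℝ) : ℂ) * ((hermiteFun j x : ℝ) : ℂ) *
            Complex.exp (-Complex.I * ((((j : ℕ) : ℂ)) - (((k : ℕ) : ℂ))) * (φ : ℂ)))
          = fun x : ℝ =>
            (ρ j k * Complex.exp (-Complex.I * ((((j : ℕ) : ℂ)) - (((k : ℕ) : ℂ))) * (φ : ℂ))) *
              ((hermiteFun k x * hermiteFun j x : ℝ) : ℂ) := by
        funext x; push_cast; ring
      rw [heq]
      exact ((integrable_hermiteFun_mul k j).ofReal.const_mul _)
    have hIx : ∀ φ : ℝ, Integrable (fun x => pFun ρ x φ) := by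
      intro φ
      unfold pFun
      exact (integrable_finset_sum _ fun j _ =>
        integrable_finset_sum _ fun k _ => hxint φ j k).const_mul _
    set Ival : Fin N → Fin N → ℝ := fun j k => ∫ x : ℝ, hermiteFun k x * hermiteFun j x
      with hIval
    have hxval : ∀ φ : ℝ, (∫ x : ℝ, pFun ρ x φ) = ((1 / Real.pi : ℝ) : ℂ) *
        ∑ j : Fin N, ∑ k : Fin N, (ρ j k * ((Ival j k : ℝ) : ℂ)) *
          Complex.exp (-Complex.I * ((((j : ℕ) : ℂ)) - (((k : ℕ) : ℂ))) * (φ : ℂ)) := by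
      intro φ
      unfold pFun
      rw [MeasureTheory.integral_const_mul]
      congr 1
      rw [integral_finset_sum _ (fun j _ => integrable_finset_sum _ fun k _ => hxint φ j k)]
      refine Finset.sum_congr rfl fun j _ => ?_
      rw [integral_finset_sum _ (fun k _ => hxint φ j k)]
      refine Finset.sum_congr rfl fun k _ => ?_
      have heq : (fun x : ℝ =>
          ρ j k * ((hermiteFun k x : ℝ) : ℂ) * ((hermiteFun j x : ℝ) : ℂ) *
            Complex.exp (-Complex.I * ((((j : ℕ) : ℂ)) - (((k : ℕ) : ℂ))) * (φ : ℂ)))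
          = fun x : ℝ =>
            (ρ j k * Complex.exp (-Complex.I * ((((j : ℕ) : ℂ)) - (((k : ℕ) : ℂ))) * (φ : ℂ))) *
              ((hermiteFun k x * hermiteFun j x : ℝ) : ℂ) := by
        funext x; push_cast; ring
      rw [heq, MeasureTheory.integral_const_mul]
      have hof := Complex.ofRealCLM.integral_comp_comm (integrable_hermiteFun_mul k j)
      simp only [Complex.ofRealCLM_apply] at hof
      rw [hof]
      ring
    set G : ℝ → ℂ := fun φ => ((1 / Real.pi : ℝ) : ℂ) *
        ∑ j : Fin N, ∑ k : Fin N, (ρ j k * ((Ival j k : ℝ) : ℂ)) *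
          Complex.exp (-Complex.I * ((((j : ℕ) : ℂ)) - (((k : ℕ) : ℂ))) * (φ : ℂ)) with hG
    have hre : ∀ φ : ℝ, (∫ x : ℝ, (pFun ρ x φ).re) = (G φ).re := by
      intro φ
      have h := _root_.integral_re (hIx φ)
      simp only [RCLike.re_to_complex] at h
      rw [h, hxval φ]
    have hGcont : Continuous G := by
      apply continuous_const.mul
      apply continuous_finset_sum
      intro j _
      apply continuous_finset_sum
      intro k _
      exact (continuous_const.mul (Complex.continuous_exp.comp
        (continuous_const.mul Complex.continuous_ofReal)))
    have hstep : (∫ φ in (0:ℝ)..Real.pi, ∫ x : ℝ, (pFun ρ x φ).re)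
        = (∫ φ in (0:ℝ)..Real.pi, G φ).re := by
      have h2 := Complex.reCLM.intervalIntegral_comp_comm
        (hGcont.intervalIntegrable (μ := volume) 0 Real.pi)
      simp only [Complex.reCLM_apply] at h2
      rw [← h2]
      exact intervalIntegral.integral_congr fun φ _ => hre φ
    rw [hstep]
    have hval : (∫ φ in (0:ℝ)..Real.pi, G φ) = 1 := by
      rw [hG]
      rw [intervalIntegral.integral_const_mul]
      rw [intervalIntegral.integral_finset_sum]
      swap
      · intro j _
        apply Continuous.intervalIntegrable
        apply continuous_finset_sum
        intro k _
        exact (continuous_const.mul (Complex.continuous_exp.comp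
          (continuous_const.mul Complex.continuous_ofReal)))
      have hjsum : ∀ j : Fin N, (∫ φ in (0:ℝ)..Real.pi,
          ∑ k : Fin N, (ρ j k * ((Ival j k : ℝ) : ℂ)) *
            Complex.exp (-Complex.I * ((((j : ℕ) : ℂ)) - (((k : ℕ) : ℂ))) * (φ : ℂ)))
          = ρ j j * Real.pi := by
        intro j
        rw [intervalIntegral.integral_finset_sum]
        swap
        · intro k _
          exact (continuous_const.mul (Complex.continuous_exp.comp
            (continuous_const.mul Complex.continuous_ofReal))).intervalIntegrable _ _
        rw [Finset.sum_eq_single j]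
        · -- diagonal term
          rw [intervalIntegral.integral_const_mul]
          have : (fun φ : ℝ => Complex.exp
              (-Complex.I * ((((j : ℕ) : ℂ)) - (((j : ℕ) : ℂ))) * (φ : ℂ))) = fun _ => 1 := by
            funext φ; simp
          rw [this]
          simp only [intervalIntegral.integral_const, sub_zero]
          have hI : Ival j j = 1 := integral_hermiteFun_self j
          rw [hI]
          push_cast
          rw [Complex.real_smul]
          ring
        · -- off-diagonal terms
          intro k _ hkj
          rw [intervalIntegral.integral_const_mul]
          have hne : (j : ℕ) ≠ (k : ℕ) := fun h => hkj (Fin.ext h).symm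
          by_cases hpar : Even ((j : ℕ) + (k : ℕ))
          · -- φ-integral vanishes
            have hm : ((j : ℕ) : ℤ) - ((k : ℕ) : ℤ) ≠ 0 := by
              intro h; apply hne; omega
            have hme : Even (((j : ℕ) : ℤ) - ((k : ℕ) : ℤ)) := by
              rw [Int.even_sub]
              rw [Nat.even_add] at hpar
              simpa [Int.even_coe_nat] using hpar
            have h0 := intervalIntegral_cexp_even _ hm hme
            have hcast : (fun φ : ℝ => Complex.exp
                (-Complex.I * ((((j : ℕ) : ℂ)) - (((k : ℕ) : ℂ))) * (φ : ℂ)))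
                = fun φ : ℝ => Complex.exp
                  (-Complex.I * (((((j : ℕ) : ℤ) - ((k : ℕ) : ℤ)) : ℤ) : ℂ) * (φ : ℂ)) := by
              funext φ; push_cast; ring_nf
            rw [hcast, h0, mul_zero]
          · -- x-integral vanishes
            have hI : Ival j k = 0 := by
              rw [hIval]
              exact integral_hermiteFun_mul_odd k j (by
                rw [Nat.add_comm]; exact hpar)
            rw [hI]
            simp
        · intro h; exact absurd (Finset.mem_univ j) h
      rw [Finset.sum_congr rfl fun j _ => hjsum j]
      rw [← Finset.sum_mul]
      have htr' : ∑ j : Fin N, ρ j j = 1 := htr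
      rw [htr', one_mul]
      push_cast
      rw [one_div, inv_mul_cancel₀]
      exact_mod_cast Real.pi_ne_zero
    rw [hval]
    simp
end

section
/- There exists a constant C > 0 such that for every N ≥ 1 and every δ ∈ (0,1], the δ-bracketing entropy of the set Q(N) of all N×N density matrices with respect to the trace norm satisfies H_{B,1}(δ, Q(N)) ≤ C N² log(N/δ). -/
open MeasureTheory ComplexOrder

/-! ### Auxiliary lemmas -/

open Matrix

noncomputable def gridPt (m : ℕ) (i : Fin m) : ℝ := -1 + (2*(i:ℝ)+1)/m

lemma round_aux (m : ℕ) (hm : 0 < m) (t : ℝ) (ht : |t| ≤ 1) :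
    ∃ i : Fin m, |t - gridPt m i| ≤ 1/m := by
  unfold gridPt
  have hmR : (0:ℝ) < m := by exact_mod_cast hm
  set s : ℝ := (t+1)*m/2 with hs
  have hs0 : 0 ≤ s := by
    have : (0:ℝ) ≤ t + 1 := by linarith [abs_le.1 ht |>.1]
    positivity
  have hsm : s ≤ m := by
    have h1 : t + 1 ≤ 2 := by linarith [abs_le.1 ht |>.2]
    rw [hs, div_le_iff₀ (by norm_num : (0:ℝ) < 2)]
    nlinarith
  set i : ℕ := min ⌊s⌋₊ (m-1) with hi
  have hilt : i < m := by
    have : m - 1 < m := Nat.sub_lt hm one_pos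
    omega
  refine ⟨⟨i, hilt⟩, ?_⟩
  have key : |s - ((i:ℝ) + 1/2)| ≤ 1/2 := by
    rcases le_or_gt ⌊s⌋₊ (m-1) with h | h
    · have hie : i = ⌊s⌋₊ := min_eq_left h
      have h1 : (⌊s⌋₊:ℝ) ≤ s := Nat.floor_le hs0
      have h2 : s < ⌊s⌋₊ + 1 := Nat.lt_floor_add_one s
      rw [hie, abs_le]
      constructor <;> linarith
    · have hfl : (⌊s⌋₊:ℝ) ≤ s := Nat.floor_le hs0
      have h1 : (m:ℝ) ≤ ⌊s⌋₊ := by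
        have : m ≤ ⌊s⌋₊ := by omega
        exact_mod_cast this
      have hse : s = m := le_antisymm hsm (le_trans h1 hfl)
      have hie : i = m - 1 := min_eq_right (le_of_lt h)
      have hm1 : ((m-1:ℕ):ℝ) = (m:ℝ) - 1 := by
        have h1m : (1:ℕ) ≤ m := hm
        push_cast [Nat.cast_sub h1m]
        ring
      rw [hie, hm1, hse, abs_le]
      constructor <;> linarith
  have ht2 : t = 2*s/m - 1 := by
    rw [hs]; field_simp; ring
  have heq : t - (-1 + (2*(i:ℝ)+1)/m) = (2/m) * (s - ((i:ℝ)+1/2)) := by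
    rw [ht2]; field_simp; ring
  rw [heq, abs_mul, abs_of_nonneg (by positivity : (0:ℝ) ≤ 2/(m:ℝ))]
  calc 2/(m:ℝ) * |s - ((i:ℝ)+1/2)| ≤ 2/(m:ℝ) * (1/2) :=
        mul_le_mul_of_nonneg_left key (by positivity)
    _ = 1/m := by ring

lemma trace_eq_sum_eigs {N : ℕ} {A : Matrix (Fin N) (Fin N) ℂ} (hA : A.IsHermitian) :
    A.trace = ∑ i, (hA.eigenvalues i : ℂ) := by
  conv_lhs => rw [hA.spectral_theorem]
  rw [Unitary.conjStarAlgAut_apply, Matrix.trace_mul_cycle]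
  have : (star (hA.eigenvectorUnitary : Matrix (Fin N) (Fin N) ℂ)) *
      (hA.eigenvectorUnitary : Matrix (Fin N) (Fin N) ℂ) = 1 :=
    Unitary.coe_star_mul_self _
  rw [this, Matrix.one_mul, Matrix.trace_diagonal]
  rfl

lemma traceNorm_psd {N : ℕ} {A : Matrix (Fin N) (Fin N) ℂ} (hA : A.PosSemidef)
    (h : A.IsHermitian) : traceNorm A h = A.trace.re := by
  rw [trace_eq_sum_eigs h, Complex.re_sum]
  unfold traceNorm
  congr 1
  ext i
  rw [abs_of_nonneg (hA.eigenvalues_nonneg i), Complex.ofReal_re]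

lemma traceNorm_congr {N : ℕ} {A B : Matrix (Fin N) (Fin N) ℂ} (h : A = B)
    (hA : A.IsHermitian) (hB : B.IsHermitian) : traceNorm A hA = traceNorm B hB := by
  subst h; rfl

lemma dot_expand {N : ℕ} (B : Matrix (Fin N) (Fin N) ℂ) (x : Fin N → ℂ) :
    star x ⬝ᵥ B.mulVec x = ∑ a, ∑ b, (starRingEnd ℂ) (x a) * B a b * x b := by
  simp [dotProduct, Matrix.mulVec, Finset.mul_sum, mul_assoc, mul_comm, mul_left_comm]

lemma herm_q_real {N : ℕ} {B : Matrix (Fin N) (Fin N) ℂ} (hB : B.IsHermitian) (x : Fin N → ℂ) :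
    (star x ⬝ᵥ B.mulVec x).im = 0 := by
  have h : star (star x ⬝ᵥ B.mulVec x) = star x ⬝ᵥ B.mulVec x := by
    simp only [dot_expand]
    rw [star_sum, Finset.sum_comm]
    refine Finset.sum_congr rfl fun a _ => ?_
    rw [star_sum]
    refine Finset.sum_congr rfl fun b _ => ?_
    rw [← hB.apply b a]
    simp only [Complex.star_def, _root_.map_mul, Complex.conj_conj]
    ring
  have := congrArg Complex.im h
  simp only [Complex.star_def, Complex.conj_im] at this
  linarith

lemma q_abs_bound {N : ℕ} {B : Matrix (Fin N) (Fin N) ℂ} {ε : ℝ} (hε0 : 0 ≤ ε)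
    (hε : ∀ j k, ‖B j k‖ ≤ ε) (x : Fin N → ℂ) :
    ‖star x ⬝ᵥ B.mulVec x‖ ≤ ε * ((N:ℝ) * ∑ a, ‖x a‖ ^ 2) := by
  have step1 : ‖star x ⬝ᵥ B.mulVec x‖ ≤
      ∑ a, ∑ b, ‖x a‖ * ‖B a b‖ * ‖x b‖ := by
    rw [dot_expand]
    refine le_trans (norm_sum_le _ _) (Finset.sum_le_sum fun a _ => ?_)
    refine le_trans (norm_sum_le _ _) (Finset.sum_le_sum fun b _ => ?_)
    rw [norm_mul, norm_mul, Complex.norm_conj]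
  have step2 : ∑ a, ∑ b, ‖x a‖ * ‖B a b‖ * ‖x b‖ ≤
      ε * (∑ a, ‖x a‖) ^ 2 := by
    have h : ∑ a, ∑ b, ‖x a‖ * ‖B a b‖ * ‖x b‖ ≤
        ∑ a, ∑ b, ‖x a‖ * ε * ‖x b‖ := by
      refine Finset.sum_le_sum fun a _ => Finset.sum_le_sum fun b _ => ?_
      exact mul_le_mul_of_nonneg_right
        (mul_le_mul_of_nonneg_left (hε a b) (norm_nonneg _))
        (norm_nonneg _)
    refine le_trans h (le_of_eq ?_)
    rw [sq, Finset.sum_mul_sum, Finset.mul_sum]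
    refine Finset.sum_congr rfl fun a _ => ?_
    rw [Finset.mul_sum]
    exact Finset.sum_congr rfl fun b _ => by ring
  have step3 : (∑ a, ‖x a‖) ^ 2 ≤ (N:ℝ) * ∑ a, ‖x a‖ ^ 2 := by
    simpa using sq_sum_le_card_mul_sum_sq (s := Finset.univ)
      (f := fun a => ‖x a‖)
  calc ‖star x ⬝ᵥ B.mulVec x‖ ≤ ε * (∑ a, ‖x a‖) ^ 2 :=
        le_trans step1 step2
    _ ≤ ε * ((N:ℝ) * ∑ a, ‖x a‖ ^ 2) :=
        mul_le_mul_of_nonneg_left step3 hε0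

lemma smul_one_herm {n : ℕ} (r : ℝ) :
    (((r:ℂ)) • (1 : Matrix (Fin n) (Fin n) ℂ)).IsHermitian := by
  unfold Matrix.IsHermitian
  rw [Matrix.conjTranspose_smul, Matrix.conjTranspose_one, Complex.star_def,
    Complex.conj_ofReal]

lemma smul_one_add_psd {N : ℕ} {B : Matrix (Fin N) (Fin N) ℂ} (hB : B.IsHermitian)
    {ε η : ℝ} (hε0 : 0 ≤ ε) (hε : ∀ j k, ‖B j k‖ ≤ ε) (hηε : (N:ℝ) * ε ≤ η) :
    (((η:ℂ) • (1 : Matrix (Fin N) (Fin N) ℂ)) + B).PosSemidef := by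
  rw [Matrix.posSemidef_iff_dotProduct_mulVec]
  constructor
  · exact (smul_one_herm η).add hB
  · intro x
    have hsplit : star x ⬝ᵥ (((η:ℂ) • (1 : Matrix (Fin N) (Fin N) ℂ)) + B).mulVec x
        = (η:ℂ) * (star x ⬝ᵥ x) + star x ⬝ᵥ B.mulVec x := by
      rw [Matrix.add_mulVec, dotProduct_add, Matrix.smul_mulVec, Matrix.one_mulVec,
        dotProduct_smul]
      simp [smul_eq_mul]
    set S : ℝ := ∑ a, ‖x a‖ ^ 2 with hS
    have hS0 : 0 ≤ S := Finset.sum_nonneg fun a _ => sq_nonneg _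
    have hxx : star x ⬝ᵥ x = (S:ℂ) := by
      rw [hS]
      push_cast
      unfold dotProduct
      refine Finset.sum_congr rfl fun a _ => ?_
      rw [Pi.star_apply, Complex.star_def, ← Complex.normSq_eq_conj_mul_self,
        ← Complex.sq_norm]
      push_cast
      ring
    set q := star x ⬝ᵥ B.mulVec x with hq
    have him : q.im = 0 := herm_q_real hB x
    have habs : ‖q‖ ≤ ε * ((N:ℝ) * S) := q_abs_bound hε0 hε x
    have hre : -(ε * ((N:ℝ) * S)) ≤ q.re := by
      have h1 : |q.re| ≤ ε * ((N:ℝ) * S) := le_trans (Complex.abs_re_le_norm q) habs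
      linarith [abs_le.1 h1 |>.1]
    rw [hsplit, hxx, Complex.nonneg_iff]
    constructor
    · simp only [Complex.add_re, Complex.mul_re, Complex.ofReal_re, Complex.ofReal_im]
      have : η * S ≥ (N:ℝ) * ε * S := mul_le_mul_of_nonneg_right hηε hS0
      simp only [mul_zero, zero_mul, sub_zero]
      nlinarith
    · simp [Complex.add_im, Complex.mul_im, him]

lemma single_quad {N : ℕ} (ρ : Matrix (Fin N) (Fin N) ℂ) (c d : ℂ) (j k : Fin N) :
    star (Pi.single j c) ⬝ᵥ ρ.mulVec (Pi.single k d) = (starRingEnd ℂ) c * ρ j k * d := by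
  have hst : star (Pi.single j c : Fin N → ℂ) = Pi.single j ((starRingEnd ℂ) c) := by
    ext i
    rcases eq_or_ne i j with h | h <;> simp [Pi.single_apply, h]
  rw [hst, Matrix.mulVec_single, single_dotProduct]
  simp only [Pi.smul_apply, op_smul_eq_mul, Matrix.col_apply]
  ring

lemma density_diag {N : ℕ} {ρ : Matrix (Fin N) (Fin N) ℂ}
    (h1 : ρ.PosSemidef) (h2 : ρ.trace = 1) (j : Fin N) :
    0 ≤ (ρ j j).re ∧ (ρ j j).im = 0 ∧ (ρ j j).re ≤ 1 := by
  have key : ∀ i : Fin N, 0 ≤ ρ i i := by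
    intro i
    have := h1.dotProduct_mulVec_nonneg (Pi.single i 1)
    rwa [single_quad ρ 1 1 i i, _root_.map_one, one_mul, mul_one] at this
  have hre : ∀ i : Fin N, 0 ≤ (ρ i i).re := fun i => (Complex.nonneg_iff.1 (key i)).1
  have him : (ρ j j).im = 0 := ((Complex.nonneg_iff.1 (key j)).2).symm
  refine ⟨hre j, him, ?_⟩
  have htr : ∑ i, (ρ i i).re = 1 := by
    have := congrArg Complex.re h2
    rwa [Matrix.trace, Complex.re_sum] at this
  calc (ρ j j).re ≤ ∑ i, (ρ i i).re :=
        Finset.single_le_sum (fun i _ => hre i) (Finset.mem_univ j)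
    _ = 1 := htr

lemma density_entry_bound {N : ℕ} {ρ : Matrix (Fin N) (Fin N) ℂ}
    (h1 : ρ.PosSemidef) (h2 : ρ.trace = 1) (j k : Fin N) :
    ‖ρ j k‖ ≤ 1 := by
  rcases eq_or_ne j k with rfl | hjk
  · obtain ⟨hp, hi, hl⟩ := density_diag h1 h2 j
    rw [Complex.norm_def, Complex.normSq_apply, hi]
    rw [show (ρ j j).re * (ρ j j).re + 0 * 0 = (ρ j j).re ^ 2 by ring,
      Real.sqrt_sq hp]
    exact hl
  · rcases eq_or_ne (ρ j k) 0 with h0 | h0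
    · simp [h0]
    set r : ℝ := ‖ρ j k‖ with hr
    have hr0 : 0 < r := by rw [hr]; exact norm_pos_iff.2 h0
    set c : ℂ := -(ρ j k) / (r : ℂ) with hc
    have hrc : (r:ℂ) ≠ 0 := by exact_mod_cast hr0.ne'
    have hkj : ρ k j = (starRingEnd ℂ) (ρ j k) := by
      rw [← h1.1.apply j k, Complex.star_def, Complex.conj_conj]
    have hcc : (starRingEnd ℂ) c * c = 1 := by
      rw [hc, map_div₀, Complex.conj_ofReal, map_neg, div_mul_div_comm, neg_mul_neg,
        ← Complex.normSq_eq_conj_mul_self, Complex.normSq_eq_norm_sq, ← hr]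
      push_cast
      field_simp
    have hterm1 : (starRingEnd ℂ) c * ρ j k = -(r:ℂ) := by
      rw [hc, map_div₀, Complex.conj_ofReal, map_neg, neg_div, neg_mul, div_mul_eq_mul_div,
        ← Complex.normSq_eq_conj_mul_self, Complex.normSq_eq_norm_sq, ← hr]
      push_cast
      field_simp
    have hterm2 : c * ρ k j = -(r:ℂ) := by
      rw [hc, hkj, neg_div, neg_mul, div_mul_eq_mul_div, Complex.mul_conj,
        Complex.normSq_eq_norm_sq, ← hr]
      push_cast
      field_simp
    set x : Fin N → ℂ := Pi.single j c + Pi.single k 1 with hx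
    have hq := h1.dotProduct_mulVec_nonneg x
    have hexp : star x ⬝ᵥ ρ.mulVec x
        = (starRingEnd ℂ) c * ρ j j * c + (starRingEnd ℂ) c * ρ j k * 1
          + (starRingEnd ℂ) 1 * ρ k j * c + (starRingEnd ℂ) 1 * ρ k k * 1 := by
      rw [hx, star_add, Matrix.mulVec_add, dotProduct_add, add_dotProduct, add_dotProduct,
        single_quad, single_quad, single_quad, single_quad]
      ring
    rw [hexp] at hq
    have hq' : 0 ≤ ρ j j + ρ k k - 2 * (r:ℂ) := by
      convert hq using 1
      rw [_root_.map_one, one_mul, mul_one, one_mul, mul_one, mul_comm (ρ k j) c, hterm2]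
      have h1' : (starRingEnd ℂ) c * ρ j j * c = ρ j j := by
        rw [mul_comm ((starRingEnd ℂ) c) (ρ j j), mul_assoc, hcc, mul_one]
      rw [h1', hterm1]
      ring
    have := (Complex.nonneg_iff.1 hq').1
    obtain ⟨hpj, _, hlj⟩ := density_diag h1 h2 j
    obtain ⟨hpk, _, hlk⟩ := density_diag h1 h2 k
    simp only [Complex.sub_re, Complex.add_re, Complex.mul_re, Complex.ofReal_re,
      Complex.ofReal_im] at this
    rw [← hr] at *
    norm_num at this
    linarith

noncomputable def approxMat (N m : ℕ) (f : Fin N → Fin N → Fin m × Fin m) :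
    Matrix (Fin N) (Fin N) ℂ :=
  Matrix.of fun j k => ((1/2 : ℝ) : ℂ) *
    (((gridPt m (f j k).1 : ℝ) : ℂ) + ((gridPt m (f j k).2 : ℝ) : ℂ) * Complex.I
      + (((gridPt m (f k j).1 : ℝ) : ℂ) - ((gridPt m (f k j).2 : ℝ) : ℂ) * Complex.I))

lemma approxMat_herm (N m : ℕ) (f : Fin N → Fin N → Fin m × Fin m) :
    (approxMat N m f).IsHermitian := by
  apply Matrix.ext
  intro i j
  simp only [Matrix.conjTranspose_apply, approxMat, Matrix.of_apply, star_mul',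
    star_add, star_sub, Complex.star_def, _root_.map_mul, Complex.conj_ofReal,
    Complex.conj_I]
  ring

lemma entry_diff_bound {N m : ℕ} {ρ : Matrix (Fin N) (Fin N) ℂ}
    (hherm : ρ.IsHermitian) (f : Fin N → Fin N → Fin m × Fin m)
    (hre : ∀ j k, |(ρ j k).re - gridPt m (f j k).1| ≤ 1/m)
    (him : ∀ j k, |(ρ j k).im - gridPt m (f j k).2| ≤ 1/m)
    (j k : Fin N) : ‖(ρ - approxMat N m f) j k‖ ≤ 2/m := by
  have hsym_re : (ρ k j).re = (ρ j k).re := by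
    rw [← hherm.apply j k]; simp [Complex.star_def]
  have hsym_im : (ρ k j).im = -(ρ j k).im := by
    rw [← hherm.apply j k]; simp [Complex.star_def]
  set z := (ρ - approxMat N m f) j k with hz
  have hzre : z.re = ((ρ j k).re - gridPt m (f j k).1) / 2
      + ((ρ k j).re - gridPt m (f k j).1) / 2 := by
    rw [hz]
    simp only [Matrix.sub_apply, Complex.sub_re, approxMat, Matrix.of_apply,
      Complex.re_ofReal_mul, Complex.add_re, Complex.sub_re, Complex.ofReal_re,
      Complex.mul_I_re, Complex.ofReal_im]
    rw [hsym_re]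
    ring
  have hzim : z.im = ((ρ j k).im - gridPt m (f j k).2) / 2
      - ((ρ k j).im - gridPt m (f k j).2) / 2 := by
    rw [hz]
    simp only [Matrix.sub_apply, Complex.sub_im, approxMat, Matrix.of_apply,
      Complex.im_ofReal_mul, Complex.add_im, Complex.sub_im, Complex.ofReal_im,
      Complex.mul_I_im, Complex.ofReal_re]
    rw [hsym_im]
    ring
  have h1 := abs_le.1 (hre j k)
  have h2 := abs_le.1 (hre k j)
  have h3 := abs_le.1 (him j k)
  have h4 := abs_le.1 (him k j)
  have hre' : |z.re| ≤ 1/m := by rw [hzre, abs_le]; constructor <;> linarith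
  have him' : |z.im| ≤ 1/m := by rw [hzim, abs_le]; constructor <;> linarith
  calc ‖z‖ ≤ |z.re| + |z.im| := Complex.norm_le_abs_re_add_abs_im z
    _ ≤ 1/m + 1/m := add_le_add hre' him'
    _ = 2/m := by ring


/-- there is a constant `C > 0` such that for every `N ≥ 1` and
`δ ∈ (0,1]`, the class of all `N×N` density matrices admits a trace-norm
`δ`-bracketing by pairs of Hermitian matrices of cardinality `p` with
`log p ≤ C N² log(N/δ)`; hence `H_{B,1}(δ, Q(N)) ≤ C N² log(N/δ)`. -/
theorem bracketing_entropy_densityMatrices :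
    ∃ C : ℝ, 0 < C ∧ ∀ N : ℕ, 1 ≤ N → ∀ δ : ℝ, δ ∈ Set.Ioc (0:ℝ) 1 →
      ∃ (p : ℕ) (L U : Fin p → Matrix (Fin N) (Fin N) ℂ)
        (hL : ∀ i, (L i).IsHermitian) (hU : ∀ i, (U i).IsHermitian),
        (∀ i, traceNorm (U i - L i) ((hU i).sub (hL i)) ≤ δ) ∧
        (∀ ρ : Matrix (Fin N) (Fin N) ℂ, IsDensityMatrix ρ →
          ∃ i, (ρ - L i).PosSemidef ∧ (U i - ρ).PosSemidef) ∧
        Real.log p ≤ C * (N : ℝ) ^ 2 * Real.log ((N : ℝ) / δ) := by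
  refine ⟨12, by norm_num, ?_⟩
  intro N hN δ hδ
  obtain ⟨hδ0, hδ1⟩ := hδ
  rcases eq_or_lt_of_le hN with hN1 | hN2
  · -- N = 1
    obtain rfl : N = 1 := hN1.symm
    refine ⟨1, fun _ => 1, fun _ => 1, fun _ => Matrix.isHermitian_one,
      fun _ => Matrix.isHermitian_one, ?_, ?_, ?_⟩
    · intro i
      have hpsd : ((1 : Matrix (Fin 1) (Fin 1) ℂ) - 1).PosSemidef := by
        rw [sub_self]; exact Matrix.PosSemidef.zero
      rw [traceNorm_psd hpsd]
      rw [sub_self, Matrix.trace_zero]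
      simpa using hδ0.le
    · intro ρ hρ
      have hρ1 : ρ = 1 := by
        have h00 : ρ 0 0 = 1 := by
          have := hρ.2
          rw [Matrix.trace] at this
          simpa [Matrix.diag] using this
        ext i j
        fin_cases i
        fin_cases j
        simpa [Matrix.one_apply] using h00
      exact ⟨0, by rw [hρ1, sub_self]; exact Matrix.PosSemidef.zero,
        by rw [hρ1, sub_self]; exact Matrix.PosSemidef.zero⟩
    · have hlog : Real.log ((1:ℕ):ℝ) = 0 := by norm_num
      rw [hlog]
      have h1δ : (1:ℝ) ≤ (1:ℝ)/δ := by
        rw [le_div_iff₀ hδ0]; linarith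
      have := Real.log_nonneg h1δ
      push_cast
      nlinarith
  · -- 2 ≤ N
    have hN2' : (2:ℝ) ≤ (N:ℝ) := by exact_mod_cast hN2
    have hNpos : (0:ℝ) < N := by linarith
    set m : ℕ := ⌈4*(N:ℝ)^2/δ⌉₊ with hmdef
    have hx0 : (0:ℝ) < 4*(N:ℝ)^2/δ := by positivity
    have hm0 : 0 < m := Nat.ceil_pos.2 hx0
    have hmR : (0:ℝ) < m := by exact_mod_cast hm0
    have hmge : 4*(N:ℝ)^2/δ ≤ m := Nat.le_ceil _
    have hNsq1 : (1:ℝ) ≤ (N:ℝ)^2/δ := by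
      rw [le_div_iff₀ hδ0]; nlinarith
    have hmle : (m:ℝ) ≤ 5*(N:ℝ)^2/δ := by
      have h1 : (m:ℝ) < 4*(N:ℝ)^2/δ + 1 := Nat.ceil_lt_add_one hx0.le
      have h2 : 4*(N:ℝ)^2/δ + 1 ≤ 5*(N:ℝ)^2/δ := by
        have : 5*(N:ℝ)^2/δ = 4*(N:ℝ)^2/δ + (N:ℝ)^2/δ := by ring
        linarith
      linarith
    set η : ℝ := δ/(2*N) with hηdef
    have hη0 : 0 < η := by positivity
    set p : ℕ := Fintype.card (Fin N → Fin N → Fin m × Fin m) with hpdef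
    set e : Fin p ≃ (Fin N → Fin N → Fin m × Fin m) :=
      (Fintype.equivFin (Fin N → Fin N → Fin m × Fin m)).symm with hedef
    have hNε : (N:ℝ) * (2/m) ≤ η := by
      rw [hηdef, show (N:ℝ)*(2/m) = (2*N)/m by ring,
        div_le_div_iff₀ hmR (by positivity)]
      have h4 : 4*(N:ℝ)^2 ≤ δ * m := by
        rw [div_le_iff₀ hδ0] at hmge
        linarith [hmge]
      nlinarith
    refine ⟨p, fun i => approxMat N m (e i) - (η:ℂ) • 1,
      fun i => approxMat N m (e i) + (η:ℂ) • 1,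
      fun i => (approxMat_herm N m (e i)).sub (smul_one_herm η),
      fun i => (approxMat_herm N m (e i)).add (smul_one_herm η), ?_, ?_, ?_⟩
    · -- widths
      intro i
      have hdiff : approxMat N m (e i) + (η:ℂ) • 1 - (approxMat N m (e i) - (η:ℂ) • 1)
          = ((2*η : ℝ):ℂ) • (1 : Matrix (Fin N) (Fin N) ℂ) := by
        push_cast
        rw [two_mul, add_smul]
        abel
      have hpsd2 : (((2*η : ℝ):ℂ) • (1 : Matrix (Fin N) (Fin N) ℂ)).PosSemidef := by
        have h := smul_one_add_psd (N := N) (B := 0) Matrix.isHermitian_zero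
          (ε := 0) (η := 2*η) le_rfl (by simp) (by simp; positivity)
        rwa [add_zero] at h
      rw [traceNorm_congr hdiff _ hpsd2.1, traceNorm_psd hpsd2]
      rw [Matrix.trace_smul, Matrix.trace_one]
      have hval : (((2*η : ℝ):ℂ) • ((Fintype.card (Fin N) : ℕ) : ℂ)) = (((2*η)*N : ℝ):ℂ) := by
        rw [smul_eq_mul, Fintype.card_fin]
        push_cast
        ring
      rw [hval, Complex.ofReal_re, hηdef]
      have hfin : 2*(δ/(2*(N:ℝ)))*(N:ℝ) = δ := by
        field_simp
      rw [hfin]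
    · -- coverage
      intro ρ hρ
      obtain ⟨hpsd, htr⟩ := hρ
      have habs : ∀ j k, ‖ρ j k‖ ≤ 1 := density_entry_bound hpsd htr
      have hre1 : ∀ j k, |(ρ j k).re| ≤ 1 :=
        fun j k => le_trans (Complex.abs_re_le_norm _) (habs j k)
      have him1 : ∀ j k, |(ρ j k).im| ≤ 1 :=
        fun j k => le_trans (Complex.abs_im_le_norm _) (habs j k)
      let f : Fin N → Fin N → Fin m × Fin m := fun j k =>
        ((round_aux m hm0 (ρ j k).re (hre1 j k)).choose,
         (round_aux m hm0 (ρ j k).im (him1 j k)).choose)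
      have hfre : ∀ j k, |(ρ j k).re - gridPt m (f j k).1| ≤ 1/m :=
        fun j k => (round_aux m hm0 (ρ j k).re (hre1 j k)).choose_spec
      have hfim : ∀ j k, |(ρ j k).im - gridPt m (f j k).2| ≤ 1/m :=
        fun j k => (round_aux m hm0 (ρ j k).im (him1 j k)).choose_spec
      have hent : ∀ j k, ‖(ρ - approxMat N m f) j k‖ ≤ 2/m :=
        entry_diff_bound hpsd.1 f hfre hfim
      have hent' : ∀ j k, ‖(approxMat N m f - ρ) j k‖ ≤ 2/m := by
        intro j k
        have : (approxMat N m f - ρ) j k = -((ρ - approxMat N m f) j k) := by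
          simp [Matrix.sub_apply]
        rw [this, norm_neg]
        exact hent j k
      refine ⟨e.symm f, ?_, ?_⟩
      · show (ρ - (approxMat N m (e (e.symm f)) - (η:ℂ) • 1)).PosSemidef
        rw [Equiv.apply_symm_apply]
        have heq : ρ - (approxMat N m f - (η:ℂ) • 1)
            = (η:ℂ) • (1 : Matrix (Fin N) (Fin N) ℂ) + (ρ - approxMat N m f) := by
          abel
        rw [heq]
        exact smul_one_add_psd (hpsd.1.sub (approxMat_herm N m f)) (by positivity) hent hNε
      · show (approxMat N m (e (e.symm f)) + (η:ℂ) • 1 - ρ).PosSemidef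
        rw [Equiv.apply_symm_apply]
        have heq : approxMat N m f + (η:ℂ) • 1 - ρ
            = (η:ℂ) • (1 : Matrix (Fin N) (Fin N) ℂ) + (approxMat N m f - ρ) := by
          abel
        rw [heq]
        exact smul_one_add_psd ((approxMat_herm N m f).sub hpsd.1) (by positivity) hent' hNε
    · -- cardinality bound
      have hp : p = ((m*m)^N)^N := by
        rw [hpdef]
        simp [Fintype.card_fun, Fintype.card_prod, Fintype.card_fin]
      have hmm : (0:ℝ) < (m*m : ℕ) := by positivity
      have hlogp : Real.log p = (N:ℝ) * ((N:ℝ) * Real.log ((m*m : ℕ) : ℝ)) := by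
        rw [hp]
        push_cast
        rw [Real.log_pow, Real.log_pow]
      have hlogmm : Real.log ((m*m : ℕ) : ℝ) = 2 * Real.log m := by
        push_cast
        rw [Real.log_mul hmR.ne' hmR.ne']
        ring
      set T := Real.log ((N:ℝ)/δ) with hT
      have hNδ2 : (2:ℝ) ≤ (N:ℝ)/δ := by
        rw [le_div_iff₀ hδ0]; nlinarith
      have hT2 : Real.log 2 ≤ T := Real.log_le_log (by norm_num) hNδ2
      have hlog2 : (0:ℝ) < Real.log 2 := Real.log_pos (by norm_num)
      have hlogN : Real.log N ≤ T := by
        rw [hT]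
        apply Real.log_le_log hNpos
        rw [le_div_iff₀ hδ0]; nlinarith
      have hlogNpos : 0 ≤ Real.log N := Real.log_nonneg (by linarith)
      have hTeq : T = Real.log N - Real.log δ := Real.log_div hNpos.ne' hδ0.ne'
      have hlogδ : Real.log δ ≤ 0 := Real.log_nonpos hδ0.le hδ1
      have hlog5 : Real.log 5 ≤ 3 * Real.log 2 := by
        have h58 : Real.log 5 ≤ Real.log 8 := Real.log_le_log (by norm_num) (by norm_num)
        have h8 : Real.log 8 = 3 * Real.log 2 := by
          rw [show (8:ℝ) = 2^(3:ℕ) by norm_num, Real.log_pow]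
          push_cast; ring
        linarith
      have hlogm : Real.log m ≤ 6 * T := by
        have h1 : Real.log m ≤ Real.log (5*(N:ℝ)^2/δ) := Real.log_le_log hmR hmle
        have h2 : Real.log (5*(N:ℝ)^2/δ)
            = Real.log 5 + 2 * Real.log N - Real.log δ := by
          rw [Real.log_div (by positivity) hδ0.ne', Real.log_mul (by norm_num) (by positivity),
            Real.log_pow]
          push_cast; ring
        have hnegδ : -Real.log δ ≤ T := by rw [hTeq]; linarith
        calc Real.log m ≤ Real.log 5 + 2 * Real.log N - Real.log δ := by rw [← h2]; exact h1
          _ ≤ 3 * Real.log 2 + 2 * T + T := by linarith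
          _ ≤ 3 * T + 2 * T + T := by linarith
          _ = 6 * T := by ring
      rw [hlogp, hlogmm]
      have hTpos : 0 ≤ T := le_trans hlog2.le hT2
      have hfin : (N:ℝ) * ((N:ℝ) * (2 * Real.log m)) = 2 * (N:ℝ)^2 * Real.log m := by
        ring
      rw [hfin]
      calc 2 * (N:ℝ)^2 * Real.log m ≤ 2 * (N:ℝ)^2 * (6*T) :=
            mul_le_mul_of_nonneg_left hlogm (by positivity)
        _ = 12 * (N:ℝ)^2 * T := by ring
end

section
/- Matrix Scheffé lemma (Hilbert–Schmidt form): let ρ^{(n)} (n ∈ ℕ) and ρ be infinite-dimensional density matrices. If ρ^{(n)}_{j,k} → ρ_{j,k} as n → ∞ for every fixed pair of indices j,k, then Σ_{j,k=0}^∞ |ρ^{(n)}_{j,k} − ρ_{j,k}|² → 0 as n → ∞. -/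
open MeasureTheory ComplexOrder

/-- An infinite-dimensional density matrix: Hermitian, unit trace, and positive
semidefinite (nonnegative quadratic form on finitely supported vectors). -/
structure InfDensityMatrix where
  m : ℕ → ℕ → ℂ
  herm : ∀ j k, m j k = (starRingEnd ℂ) (m k j)
  tr : HasSum (fun k => m k k) 1
  pos : ∀ (s : Finset ℕ) (α : ℕ → ℂ),
    0 ≤ (∑ j ∈ s, ∑ k ∈ s, (starRingEnd ℂ) (α j) * m j k * α k).re


namespace InfDensityMatrix

noncomputable def d (ρ : InfDensityMatrix) (j : ℕ) : ℝ := (ρ.m j j).re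

lemma d_nonneg (ρ : InfDensityMatrix) (j : ℕ) : 0 ≤ ρ.d j := by
  have := ρ.pos {j} (fun i => if i = j then 1 else 0)
  simpa [d] using this

lemma hasSum_d (ρ : InfDensityMatrix) : HasSum ρ.d 1 := by
  exact (by simpa using Complex.hasSum_re ρ.tr : HasSum (fun x => (ρ.m x x).re) 1)

lemma abs_sq_le (ρ : InfDensityMatrix) (j k : ℕ) :
    ‖ρ.m j k‖ ^ 2 ≤ ρ.d j * ρ.d k := by
  rcases eq_or_ne j k with rfl | hjk
  · have him : (ρ.m j j).im = 0 := by
      have := ρ.herm j j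
      have h2 := congrArg Complex.im this
      simp at h2
      linarith
    rw [Complex.sq_norm, Complex.normSq_apply, him]
    simp [d, mul_self_nonneg]
  · set R : ℝ := Complex.normSq (ρ.m j k) with hR
    have key : ∀ t : ℝ, 0 ≤ ρ.d j * (t * t) + (-(2 * R)) * t + R * ρ.d k := by
      intro t
      have hp := ρ.pos {j, k}
        (fun i => if i = j then (t : ℂ) else if i = k then -(starRingEnd ℂ) (ρ.m j k) else 0)
      have hsum : (∑ a ∈ ({j, k} : Finset ℕ), ∑ b ∈ ({j, k} : Finset ℕ),
          (starRingEnd ℂ) ((fun i => if i = j then (t : ℂ) else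
            if i = k then -(starRingEnd ℂ) (ρ.m j k) else 0) a) * ρ.m a b *
            ((fun i => if i = j then (t : ℂ) else
              if i = k then -(starRingEnd ℂ) (ρ.m j k) else 0) b))
          = (t : ℂ) * t * ρ.m j j + (R : ℂ) * ρ.m k k - 2 * t * (R : ℂ) := by
        rw [Finset.sum_pair hjk, Finset.sum_pair hjk, Finset.sum_pair hjk]
        have hm : ρ.m k j = (starRingEnd ℂ) (ρ.m j k) := ρ.herm k j
        simp only [hm, hjk, hjk.symm, if_true, if_false, ite_true, ite_false,
          eq_self_iff_true, if_neg hjk, if_neg hjk.symm, map_mul, RingHom.map_neg,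
          Complex.conj_conj, Complex.conj_ofReal]
        simp [hjk, hjk.symm]
        rw [hR, ← Complex.mul_conj]
        push_cast
        ring
      rw [hsum] at hp
      have : ((t : ℂ) * t * ρ.m j j + (R : ℂ) * ρ.m k k - 2 * t * (R : ℂ)).re
          = ρ.d j * (t * t) + (-(2 * R)) * t + R * ρ.d k := by
        simp [Complex.add_re, Complex.sub_re, Complex.mul_re, Complex.ofReal_re,
          Complex.ofReal_im, d]
        ring
      linarith [this ▸ hp]
    have hd := discrim_le_zero key
    rw [discrim] at hd
    have hRnn : 0 ≤ R := Complex.normSq_nonneg _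
    rcases eq_or_lt_of_le hRnn with hR0 | hRpos
    · rw [Complex.sq_norm, ← hR, ← hR0]
      exact mul_nonneg (ρ.d_nonneg j) (ρ.d_nonneg k)
    · have h4 : 4 * (R * R) ≤ 4 * (ρ.d j * ρ.d k * R) := by nlinarith
      have : R ≤ ρ.d j * ρ.d k := by
        have := (mul_le_mul_iff_of_pos_right hRpos).mp (by nlinarith : R * R ≤ (ρ.d j * ρ.d k) * R)
        exact this
      rw [Complex.sq_norm, ← hR]
      exact this

end InfDensityMatrix

namespace InfDensityMatrix

lemma summable_dd (ρ σ : InfDensityMatrix) :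
    Summable (fun q : ℕ × ℕ => ρ.d q.1 * σ.d q.2) :=
  Summable.mul_of_nonneg ρ.hasSum_d.summable σ.hasSum_d.summable ρ.d_nonneg σ.d_nonneg

lemma hasSum_dd (ρ : InfDensityMatrix) :
    HasSum (fun q : ℕ × ℕ => ρ.d q.1 * ρ.d q.2) 1 := by
  simpa using ρ.hasSum_d.mul ρ.hasSum_d (ρ.summable_dd ρ)

lemma summable_abs_sq (ρ : InfDensityMatrix) :
    Summable (fun q : ℕ × ℕ => ‖ρ.m q.1 q.2‖ ^ 2) :=
  (ρ.summable_dd ρ).of_nonneg_of_le (fun q => by positivity)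
    (fun q => ρ.abs_sq_le q.1 q.2)

/-- Tail bound: the sum of `|ρ_{jk}|²` outside `S × S` is at most `1 - (Σ_{j∈S} d j)²`. -/
lemma tail_bound (ρ : InfDensityMatrix) (S : Finset ℕ) :
    ∑' q : ↑(↑(S ×ˢ S) : Set (ℕ × ℕ))ᶜ, ‖ρ.m (q : ℕ × ℕ).1 (q : ℕ × ℕ).2‖ ^ 2
      ≤ 1 - (∑ j ∈ S, ρ.d j) ^ 2 := by
  have h1 : ∑' q : ↑(↑(S ×ˢ S) : Set (ℕ × ℕ))ᶜ,
      ‖ρ.m (q : ℕ × ℕ).1 (q : ℕ × ℕ).2‖ ^ 2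
      ≤ ∑' q : ↑(↑(S ×ˢ S) : Set (ℕ × ℕ))ᶜ, ρ.d (q : ℕ × ℕ).1 * ρ.d (q : ℕ × ℕ).2 :=
    Summable.tsum_le_tsum (fun q => ρ.abs_sq_le _ _)
      (ρ.summable_abs_sq.subtype _) ((ρ.summable_dd ρ).subtype _)
  have h2 : ∑ q ∈ S ×ˢ S, ρ.d q.1 * ρ.d q.2
      + ∑' q : ↑(↑(S ×ˢ S) : Set (ℕ × ℕ))ᶜ, ρ.d (q : ℕ × ℕ).1 * ρ.d (q : ℕ × ℕ).2 = 1 := by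
    rw [Summable.sum_add_tsum_compl ((ρ.summable_dd ρ))]
    exact ρ.hasSum_dd.tsum_eq
  have h3 : ∑ q ∈ S ×ˢ S, ρ.d q.1 * ρ.d q.2 = (∑ j ∈ S, ρ.d j) ^ 2 := by
    rw [Finset.sum_product, sq, Finset.sum_mul]
    congr 1; ext j; rw [Finset.mul_sum]
  linarith
end InfDensityMatrix


/-- matrix Scheffé lemma, Hilbert–Schmidt form: if the entries
of infinite-dimensional density matrices `ρ⁽ⁿ⁾` converge to the entries of a
density matrix `ρ`, then `Σ_{j,k} |ρ⁽ⁿ⁾_{j,k} − ρ_{j,k}|² → 0`. -/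
theorem matrix_scheffe (ρn : ℕ → InfDensityMatrix) (ρ : InfDensityMatrix)
    (h : ∀ j k : ℕ, Filter.Tendsto (fun n => (ρn n).m j k) Filter.atTop
      (nhds (ρ.m j k))) :
    Filter.Tendsto
      (fun n => ∑' q : ℕ × ℕ, ‖(ρn n).m q.1 q.2 - ρ.m q.1 q.2‖ ^ 2)
      Filter.atTop (nhds 0) := by

  classical
  set F : ℕ → ℕ × ℕ → ℝ :=
    fun n q => ‖(ρn n).m q.1 q.2 - ρ.m q.1 q.2‖ ^ 2 with hF
  have hFle : ∀ n q, F n q ≤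
      2 * (‖(ρn n).m q.1 q.2‖ ^ 2 + ‖ρ.m q.1 q.2‖ ^ 2) := by
    intro n q
    have h1 : ‖(ρn n).m q.1 q.2 - ρ.m q.1 q.2‖
        ≤ ‖(ρn n).m q.1 q.2‖ + ‖ρ.m q.1 q.2‖ := by
      simpa using norm_sub_le ((ρn n).m q.1 q.2) (ρ.m q.1 q.2)
    show ‖(ρn n).m q.1 q.2 - ρ.m q.1 q.2‖ ^ 2 ≤ _
    nlinarith [norm_nonneg ((ρn n).m q.1 q.2), norm_nonneg (ρ.m q.1 q.2),
      norm_nonneg ((ρn n).m q.1 q.2 - ρ.m q.1 q.2),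
      sq_nonneg (‖(ρn n).m q.1 q.2‖ - ‖ρ.m q.1 q.2‖)]
  have hGsum : ∀ n, Summable (fun q : ℕ × ℕ =>
      2 * (‖(ρn n).m q.1 q.2‖ ^ 2 + ‖ρ.m q.1 q.2‖ ^ 2)) :=
    fun n => (((ρn n).summable_abs_sq.add ρ.summable_abs_sq).mul_left 2)
  have hFsum : ∀ n, Summable (F n) := fun n =>
    (hGsum n).of_nonneg_of_le (fun q => by positivity) (hFle n)
  rw [Metric.tendsto_atTop]
  intro ε hε
  set δ : ℝ := ε / 10 with hδdef
  have hδ : 0 < δ := by positivity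
  -- choose a finite set capturing most of the trace of ρ
  have htd := ρ.hasSum_d.tendsto_sum_nat
  have : ∀ᶠ M in Filter.atTop, 1 - δ < ∑ i ∈ Finset.range M, ρ.d i :=
    htd.eventually (eventually_gt_nhds (by linarith))
  obtain ⟨M, hM⟩ := this.exists
  set S : Finset ℕ := Finset.range M with hS
  -- eventual facts
  have hdn : ∀ j, Filter.Tendsto (fun n => (ρn n).d j) Filter.atTop (nhds (ρ.d j)) :=
    fun j => (Complex.continuous_re.tendsto _).comp (h j j)
  have hA : ∀ᶠ n in Filter.atTop, 1 - δ < ∑ j ∈ S, (ρn n).d j := by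
    have : Filter.Tendsto (fun n => ∑ j ∈ S, (ρn n).d j) Filter.atTop
        (nhds (∑ j ∈ S, ρ.d j)) := tendsto_finset_sum _ (fun j _ => hdn j)
    exact this.eventually (eventually_gt_nhds hM)
  have hB : ∀ᶠ n in Filter.atTop, ∑ q ∈ S ×ˢ S, F n q < δ := by
    have : Filter.Tendsto (fun n => ∑ q ∈ S ×ˢ S, F n q) Filter.atTop (nhds 0) := by
      have h0 : (0 : ℝ) = ∑ q ∈ S ×ˢ S, (0 : ℝ) := by simp
      rw [h0]
      refine tendsto_finset_sum _ (fun q _ => ?_)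
      have : Filter.Tendsto (fun n => (ρn n).m q.1 q.2 - ρ.m q.1 q.2) Filter.atTop
          (nhds 0) := by
        simpa using (h q.1 q.2).sub (tendsto_const_nhds (x := ρ.m q.1 q.2))
      simpa using ((continuous_norm.tendsto 0).comp this).pow 2
    exact this.eventually (eventually_lt_nhds hδ)
  obtain ⟨N, hN⟩ := (hA.and hB).exists_forall_of_atTop
  refine ⟨N, fun n hn => ?_⟩
  obtain ⟨hA', hB'⟩ := hN n hn
  -- tail bounds
  have hxle : ∀ σ : InfDensityMatrix, ∑ j ∈ S, σ.d j ≤ 1 :=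
    fun σ => sum_le_hasSum S (fun i _ => σ.d_nonneg i) σ.hasSum_d
  have htail : ∀ (σ : InfDensityMatrix), 1 - δ < ∑ j ∈ S, σ.d j →
      ∑' q : ↑(↑(S ×ˢ S) : Set (ℕ × ℕ))ᶜ,
        ‖σ.m (q : ℕ × ℕ).1 (q : ℕ × ℕ).2‖ ^ 2 ≤ 2 * δ := by
    intro σ hσ
    have h1 := σ.tail_bound S
    have h2 := hxle σ
    have h3 : (0:ℝ) ≤ ∑ j ∈ S, σ.d j := Finset.sum_nonneg (fun i _ => σ.d_nonneg i)
    nlinarith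
  have htail1 := htail (ρn n) hA'
  have htail2 := htail ρ (by linarith [hM])
  -- split the total sum
  have hsplit : ∑' q : ℕ × ℕ, F n q = ∑ q ∈ S ×ˢ S, F n q
      + ∑' q : ↑(↑(S ×ˢ S) : Set (ℕ × ℕ))ᶜ, F n q :=
    (Summable.sum_add_tsum_compl (hFsum n)).symm
  have hcompl : ∑' q : ↑(↑(S ×ˢ S) : Set (ℕ × ℕ))ᶜ, F n q ≤ 8 * δ := by
    have hle : ∑' q : ↑(↑(S ×ˢ S) : Set (ℕ × ℕ))ᶜ, F n q
        ≤ ∑' q : ↑(↑(S ×ˢ S) : Set (ℕ × ℕ))ᶜ,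
            2 * (‖(ρn n).m (q : ℕ × ℕ).1 (q : ℕ × ℕ).2‖ ^ 2
              + ‖ρ.m (q : ℕ × ℕ).1 (q : ℕ × ℕ).2‖ ^ 2) :=
      Summable.tsum_le_tsum (fun q => hFle n q) ((hFsum n).subtype _) ((hGsum n).subtype _)
    have heq : ∑' q : ↑(↑(S ×ˢ S) : Set (ℕ × ℕ))ᶜ,
          2 * (‖(ρn n).m (q : ℕ × ℕ).1 (q : ℕ × ℕ).2‖ ^ 2
            + ‖ρ.m (q : ℕ × ℕ).1 (q : ℕ × ℕ).2‖ ^ 2)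
        = 2 * (∑' q : ↑(↑(S ×ˢ S) : Set (ℕ × ℕ))ᶜ,
              ‖(ρn n).m (q : ℕ × ℕ).1 (q : ℕ × ℕ).2‖ ^ 2
            + ∑' q : ↑(↑(S ×ˢ S) : Set (ℕ × ℕ))ᶜ,
              ‖ρ.m (q : ℕ × ℕ).1 (q : ℕ × ℕ).2‖ ^ 2) := by
      rw [tsum_mul_left]
      congr 1
      exact Summable.tsum_add (((ρn n).summable_abs_sq).subtype _) ((ρ.summable_abs_sq).subtype _)
    rw [heq] at hle
    linarith
  have hfn : ∑' q : ℕ × ℕ, F n q ≤ 9 * δ := by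
    rw [hsplit]; linarith
  have hfn0 : 0 ≤ ∑' q : ℕ × ℕ, F n q := tsum_nonneg (fun q => by positivity)
  rw [Real.dist_eq, sub_zero, abs_of_nonneg hfn0]
  calc ∑' q : ℕ × ℕ, F n q ≤ 9 * δ := hfn
    _ < ε := by rw [hδdef]; linarith
end

section
/- Semigroup property of the Bernoulli transformation: for all η₁, η₂ ∈ (0,1] and every infinite-dimensional density matrix ρ, the entrywise identity B(η₁)(B(η₂)ρ) = B(η₁ η₂)ρ holds, where all the defining series converge absolutely. -/
open MeasureTheory ComplexOrder

/-- Binomial weight `b_j^m(η) = C(m,j) η^j (1−η)^{m−j}`. -/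
noncomputable def bernWeight (η : ℝ) (j m : ℕ) : ℝ :=
  (m.choose j : ℝ) * η ^ j * (1 - η) ^ (m - j)

/-- The Bernoulli transformation
`(B(η)ρ)_{j,k} = Σ_p √(b_j^{j+p}(η) b_k^{k+p}(η)) ρ_{j+p,k+p}`. -/
noncomputable def bernoulliMap (η : ℝ) (ρ : ℕ → ℕ → ℂ) : ℕ → ℕ → ℂ :=
  fun j k => ∑' p : ℕ,
    ((Real.sqrt (bernWeight η j (j + p) * bernWeight η k (k + p)) : ℝ) : ℂ) *
      ρ (j + p) (k + p)

lemma bernWeight_nonneg {η : ℝ} (h0 : 0 ≤ η) (h1 : η ≤ 1) (j m : ℕ) :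
    0 ≤ bernWeight η j m := by
  have : (0:ℝ) ≤ 1 - η := by linarith
  unfold bernWeight; positivity

lemma bernWeight_shift (η : ℝ) (j p : ℕ) :
    bernWeight η j (j + p) = ((j + p).choose j : ℝ) * η ^ j * (1 - η) ^ p := by
  unfold bernWeight; rw [Nat.add_sub_cancel_left]

lemma hasSum_bernWeight {η : ℝ} (h0 : 0 < η) (h1 : η ≤ 1) (j : ℕ) :
    HasSum (fun p => bernWeight η j (j + p)) (1 / η) := by
  have hr : ‖1 - η‖ < 1 := by
    rw [Real.norm_eq_abs, abs_lt]; constructor <;> linarith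
  have h := (hasSum_choose_mul_geometric_of_norm_lt_one (𝕜 := ℝ) j hr).mul_left (η ^ j)
  have hv : η ^ j * (1 / (1 - (1 - η)) ^ (j + 1)) = 1 / η := by
    have : 1 - (1 - η) = η := by ring
    rw [this, pow_succ]
    field_simp
  rw [hv] at h
  convert h using 2 with p; rfl
  rw [bernWeight_shift, Nat.add_comm j p]
  ring

lemma sqrt_mul_le {a b : ℝ} (ha : 0 ≤ a) (hb : 0 ≤ b) :
    Real.sqrt (a * b) ≤ (a + b) / 2 := by
  have h : a * b ≤ ((a + b) / 2) ^ 2 := by nlinarith [sq_nonneg (a - b)]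
  calc Real.sqrt (a * b) ≤ Real.sqrt (((a + b) / 2) ^ 2) := Real.sqrt_le_sqrt h
    _ = (a + b) / 2 := Real.sqrt_sq (by positivity)

lemma hasSum_pair_bound {η : ℝ} (h0 : 0 < η) (h1 : η ≤ 1) (j k : ℕ) :
    HasSum (fun p => (bernWeight η j (j + p) + bernWeight η k (k + p)) / 2) (1 / η) := by
  have h := ((hasSum_bernWeight h0 h1 j).add (hasSum_bernWeight h0 h1 k)).div_const 2
  convert h using 1; rfl; ring

lemma summable_sqrt_pair {η : ℝ} (h0 : 0 < η) (h1 : η ≤ 1) (j k : ℕ) :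
    Summable (fun p => Real.sqrt (bernWeight η j (j + p) * bernWeight η k (k + p))) :=
  Summable.of_nonneg_of_le (fun p => Real.sqrt_nonneg _)
    (fun p => sqrt_mul_le (bernWeight_nonneg h0.le h1 _ _) (bernWeight_nonneg h0.le h1 _ _))
    (hasSum_pair_bound h0 h1 j k).summable

lemma tsum_sqrt_pair_le {η : ℝ} (h0 : 0 < η) (h1 : η ≤ 1) (j k : ℕ) :
    (∑' p, Real.sqrt (bernWeight η j (j + p) * bernWeight η k (k + p))) ≤ 1 / η := by
  calc (∑' p, Real.sqrt (bernWeight η j (j + p) * bernWeight η k (k + p)))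
      ≤ ∑' p, (bernWeight η j (j + p) + bernWeight η k (k + p)) / 2 :=
        Summable.tsum_le_tsum (fun p => sqrt_mul_le (bernWeight_nonneg h0.le h1 _ _)
          (bernWeight_nonneg h0.le h1 _ _)) (summable_sqrt_pair h0 h1 j k)
          (hasSum_pair_bound h0 h1 j k).summable
    _ = 1 / η := (hasSum_pair_bound h0 h1 j k).tsum_eq

lemma diag_re_nonneg (ρ : InfDensityMatrix) (n : ℕ) : 0 ≤ (ρ.m n n).re := by
  have h := ρ.pos {n} (fun _ => 1)
  simpa using h

lemma diag_re_le_one (ρ : InfDensityMatrix) (n : ℕ) : (ρ.m n n).re ≤ 1 := by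
  have h : HasSum (fun k => (ρ.m k k).re) 1 := by
    simpa using Complex.hasSum_re ρ.tr
  exact le_hasSum h n (fun i _ => diag_re_nonneg ρ i)

lemma abs_entry_le_one (ρ : InfDensityMatrix) (j k : ℕ) : norm (ρ.m j k) ≤ 1 := by
  rcases eq_or_ne j k with rfl | hjk
  · have hd : ρ.m j j = ((ρ.m j j).re : ℂ) := by
      have h := ρ.herm j j
      have him : (ρ.m j j).im = 0 := by
        have := congrArg Complex.im h
        simp only [Complex.conj_im] at this
        linarith
      rw [Complex.ext_iff]
      simp [him]
    rw [hd, Complex.norm_real, Real.norm_eq_abs, abs_of_nonneg (diag_re_nonneg ρ j)]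
    exact diag_re_le_one ρ j
  · set a := ρ.m j k with ha
    set c := norm a with hc
    rcases eq_or_lt_of_le (norm_nonneg a) with h0 | h0
    · rw [hc, ← h0]; norm_num
    · have h := ρ.pos {j, k} (fun n => if n = j then (c : ℂ) else if n = k then -(starRingEnd ℂ) a else 0)
      rw [Finset.sum_pair hjk] at h
      rw [Finset.sum_pair hjk, Finset.sum_pair hjk] at h
      simp only [if_pos rfl, if_neg hjk, if_neg hjk.symm, eq_self_iff_true, if_true] at h
      have hkj : ρ.m k j = (starRingEnd ℂ) a := by rw [ρ.herm k j]
      have hmc : a * (starRingEnd ℂ) a = ((c ^ 2 : ℝ) : ℂ) := by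
        rw [Complex.mul_conj, hc, Complex.normSq_eq_norm_sq]
      have hQ : (starRingEnd ℂ) (c : ℂ) * ρ.m j j * (c : ℂ) +
            (starRingEnd ℂ) (c : ℂ) * a * -(starRingEnd ℂ) a +
            ((starRingEnd ℂ) (-(starRingEnd ℂ) a) * ρ.m k j * (c : ℂ) +
            (starRingEnd ℂ) (-(starRingEnd ℂ) a) * ρ.m k k * -(starRingEnd ℂ) a) =
          ((c^2 : ℝ) : ℂ) * ρ.m j j + ((c^2 : ℝ) : ℂ) * ρ.m k k - 2 * ((c^3 : ℝ) : ℂ) := by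
        rw [hkj]
        simp only [Complex.conj_ofReal, map_neg, RingHom.id_apply, Complex.conj_conj]
        have h1 : (starRingEnd ℂ) a * a = ((c ^ 2 : ℝ) : ℂ) := by rw [mul_comm]; exact hmc
        push_cast
        calc (c : ℂ) * ρ.m j j * c + c * a * -(starRingEnd ℂ) a +
              (-a * (starRingEnd ℂ) a * c + -a * ρ.m k k * -(starRingEnd ℂ) a)
            = (c:ℂ)^2 * ρ.m j j - (c:ℂ) * (a * (starRingEnd ℂ) a)
              - (a * (starRingEnd ℂ) a) * c + (a * (starRingEnd ℂ) a) * ρ.m k k := by ring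
          _ = _ := by rw [hmc]; push_cast; ring
      rw [hQ] at h
      simp only [Complex.sub_re, Complex.add_re, Complex.mul_re, Complex.ofReal_re,
        Complex.ofReal_im, Complex.re_ofNat, Complex.im_ofNat] at h
      have hj1 := diag_re_le_one ρ j
      have hk1 := diag_re_le_one ρ k
      have hcp : 0 < c := by rw [hc]; exact h0
      nlinarith [mul_le_mul_of_nonneg_left hj1 (sq_nonneg c),
        mul_le_mul_of_nonneg_left hk1 (sq_nonneg c), mul_pos hcp hcp, hcp]

lemma abs_sqrt_term (w : ℝ) (z : ℂ) (hw : 0 ≤ w) :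
    norm ((w : ℂ) * z) = w * norm z := by
  rw [norm_mul, Complex.norm_real, Real.norm_eq_abs, abs_of_nonneg hw]

lemma summable_abs_term {η C : ℝ} (h0 : 0 < η) (h1 : η ≤ 1) (f : ℕ → ℕ → ℂ)
    (hf : ∀ m n, norm (f m n) ≤ C) (a b : ℕ) :
    Summable (fun p => norm
      (((Real.sqrt (bernWeight η a (a + p) * bernWeight η b (b + p)) : ℝ) : ℂ) *
        f (a + p) (b + p))) := by
  have hC : 0 ≤ C := le_trans (norm_nonneg _) (hf 0 0)
  apply Summable.of_nonneg_of_le (fun p => norm_nonneg _)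
    (fun p => ?_) ((summable_sqrt_pair h0 h1 a b).mul_right C)
  rw [abs_sqrt_term _ _ (Real.sqrt_nonneg _)]
  exact mul_le_mul_of_nonneg_left (hf _ _) (Real.sqrt_nonneg _)

lemma tsum_abs_term_le {η C : ℝ} (h0 : 0 < η) (h1 : η ≤ 1) (f : ℕ → ℕ → ℂ)
    (hf : ∀ m n, norm (f m n) ≤ C) (a b : ℕ) :
    (∑' p, norm
      (((Real.sqrt (bernWeight η a (a + p) * bernWeight η b (b + p)) : ℝ) : ℂ) *
        f (a + p) (b + p))) ≤ C / η := by
  have hC : 0 ≤ C := le_trans (norm_nonneg _) (hf 0 0)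
  calc (∑' p, norm
        (((Real.sqrt (bernWeight η a (a + p) * bernWeight η b (b + p)) : ℝ) : ℂ) *
          f (a + p) (b + p)))
      ≤ ∑' p, Real.sqrt (bernWeight η a (a + p) * bernWeight η b (b + p)) * C := by
        apply Summable.tsum_le_tsum (fun p => ?_) (summable_abs_term h0 h1 f hf a b)
          ((summable_sqrt_pair h0 h1 a b).mul_right C)
        rw [abs_sqrt_term _ _ (Real.sqrt_nonneg _)]
        exact mul_le_mul_of_nonneg_left (hf _ _) (Real.sqrt_nonneg _)
    _ = (∑' p, Real.sqrt (bernWeight η a (a + p) * bernWeight η b (b + p))) * C :=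
        tsum_mul_right
    _ ≤ (1 / η) * C := mul_le_mul_of_nonneg_right (tsum_sqrt_pair_le h0 h1 a b) hC
    _ = C / η := by ring

lemma abs_bernoulliMap_le {η C : ℝ} (h0 : 0 < η) (h1 : η ≤ 1) (f : ℕ → ℕ → ℂ)
    (hf : ∀ m n, norm (f m n) ≤ C) (a b : ℕ) :
    norm (bernoulliMap η f a b) ≤ C / η := by
  refine le_trans ?_ (tsum_abs_term_le h0 h1 f hf a b)
  refine le_trans (norm_tsum_le_tsum_norm ?_) ?_
  · exact summable_abs_term h0 h1 f hf a b
  · exact le_rfl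

lemma choose_key (a p q : ℕ) :
    (a + p).choose a * ((a + p + q).choose (a + p)) =
      (p + q).choose p * ((a + (p + q)).choose a) := by
  have h := Nat.choose_mul (n := a + p + q) (show a ≤ a + p by omega)
  simp only [show a + p + q - a = p + q by omega, show a + p - a = p by omega] at h
  rw [show a + (p + q) = a + p + q by omega]
  rw [Nat.mul_comm] at h
  rw [h, Nat.mul_comm]

lemma bern_comp (η₁ η₂ : ℝ) (a p q : ℕ) :
    bernWeight η₁ a (a + p) * bernWeight η₂ (a + p) ((a + p) + q) =
      (((p + q).choose p : ℝ) * (η₂ * (1 - η₁)) ^ p * (1 - η₂) ^ q) *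
        (((a + (p + q)).choose a : ℝ) * (η₁ * η₂) ^ a) := by
  rw [bernWeight_shift, bernWeight_shift]
  have h : ((a + p).choose a : ℝ) * ((a + p + q).choose (a + p) : ℝ) =
      ((p + q).choose p : ℝ) * ((a + (p + q)).choose a : ℝ) := by
    exact_mod_cast congrArg (Nat.cast : ℕ → ℝ) (choose_key a p q)
  simp only [mul_pow]
  linear_combination (η₁ ^ a * η₂ ^ a * η₂ ^ p * (1 - η₁) ^ p * (1 - η₂) ^ q) * h

lemma sqrt_w_prod {η₁ η₂ : ℝ} (h₁0 : 0 ≤ η₁) (h₁1 : η₁ ≤ 1) (h₂0 : 0 ≤ η₂) (h₂1 : η₂ ≤ 1)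
    (j k p q : ℕ) :
    Real.sqrt (bernWeight η₁ j (j + p) * bernWeight η₁ k (k + p)) *
      Real.sqrt (bernWeight η₂ (j + p) ((j + p) + q) * bernWeight η₂ (k + p) ((k + p) + q)) =
    (((p + q).choose p : ℝ) * (η₂ * (1 - η₁)) ^ p * (1 - η₂) ^ q) *
      Real.sqrt ((((j + (p + q)).choose j : ℝ) * (η₁ * η₂) ^ j) *
        (((k + (p + q)).choose k : ℝ) * (η₁ * η₂) ^ k)) := by
  set c : ℝ := ((p + q).choose p : ℝ) * (η₂ * (1 - η₁)) ^ p * (1 - η₂) ^ q with hc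
  have hcnn : 0 ≤ c := by
    rw [hc]
    have : (0:ℝ) ≤ 1 - η₁ := by linarith
    have : (0:ℝ) ≤ 1 - η₂ := by linarith
    positivity
  rw [← Real.sqrt_mul (mul_nonneg (bernWeight_nonneg h₁0 h₁1 _ _)
    (bernWeight_nonneg h₁0 h₁1 _ _))]
  have key : (bernWeight η₁ j (j + p) * bernWeight η₁ k (k + p)) *
      (bernWeight η₂ (j + p) ((j + p) + q) * bernWeight η₂ (k + p) ((k + p) + q)) =
      c ^ 2 * ((((j + (p + q)).choose j : ℝ) * (η₁ * η₂) ^ j) *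
        (((k + (p + q)).choose k : ℝ) * (η₁ * η₂) ^ k)) := by
    have hj := bern_comp η₁ η₂ j p q
    have hk := bern_comp η₁ η₂ k p q
    calc (bernWeight η₁ j (j + p) * bernWeight η₁ k (k + p)) *
        (bernWeight η₂ (j + p) ((j + p) + q) * bernWeight η₂ (k + p) ((k + p) + q))
        = (bernWeight η₁ j (j + p) * bernWeight η₂ (j + p) ((j + p) + q)) *
          (bernWeight η₁ k (k + p) * bernWeight η₂ (k + p) ((k + p) + q)) := by ring
      _ = _ := by rw [hj, hk, hc]; ring
  rw [key, Real.sqrt_mul (sq_nonneg c), Real.sqrt_sq hcnn]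

lemma sqrt_T {η : ℝ} (h0 : 0 ≤ η) (h1 : η ≤ 1) (j k r : ℕ) :
    Real.sqrt (bernWeight η j (j + r) * bernWeight η k (k + r)) =
      (1 - η) ^ r * Real.sqrt ((((j + r).choose j : ℝ) * η ^ j) *
        (((k + r).choose k : ℝ) * η ^ k)) := by
  rw [bernWeight_shift, bernWeight_shift]
  have key : ((j + r).choose j : ℝ) * η ^ j * (1 - η) ^ r *
      (((k + r).choose k : ℝ) * η ^ k * (1 - η) ^ r) =
      ((1 - η) ^ r) ^ 2 * ((((j + r).choose j : ℝ) * η ^ j) *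
        (((k + r).choose k : ℝ) * η ^ k)) := by ring
  have h1η : (0:ℝ) ≤ 1 - η := by linarith
  rw [key, Real.sqrt_mul (sq_nonneg _), Real.sqrt_sq (by positivity)]

lemma bern_semigroup_entry {η₁ η₂ : ℝ} (h₁0 : 0 < η₁) (h₁1 : η₁ ≤ 1)
    (h₂0 : 0 < η₂) (h₂1 : η₂ ≤ 1) (ρ : InfDensityMatrix) (j k : ℕ) :
    bernoulliMap η₁ (bernoulliMap η₂ ρ.m) j k = bernoulliMap (η₁ * η₂) ρ.m j k := by
  have hρ : ∀ m n, norm (ρ.m m n) ≤ 1 := abs_entry_le_one ρ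
  have hηη0 : 0 < η₁ * η₂ := mul_pos h₁0 h₂0
  have hηη1 : η₁ * η₂ ≤ 1 := mul_le_one₀ h₁1 h₂0.le h₂1
  set w₁ : ℕ → ℝ := fun p => Real.sqrt (bernWeight η₁ j (j + p) * bernWeight η₁ k (k + p))
    with hw₁
  set w₂ : ℕ → ℕ → ℝ := fun p q => Real.sqrt
    (bernWeight η₂ (j + p) ((j + p) + q) * bernWeight η₂ (k + p) ((k + p) + q)) with hw₂
  set S : ℕ → ℝ := fun r => Real.sqrt ((((j + r).choose j : ℝ) * (η₁ * η₂) ^ j) *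
    (((k + r).choose k : ℝ) * (η₁ * η₂) ^ k)) with hS
  set F : ℕ × ℕ → ℂ := fun pq => ((w₁ pq.1 * w₂ pq.1 pq.2 : ℝ) : ℂ) *
    ρ.m ((j + pq.1) + pq.2) ((k + pq.1) + pq.2) with hF
  -- norm identity
  have hnorm : ∀ p q, ‖F (p, q)‖ = w₁ p * norm (((w₂ p q : ℝ) : ℂ) *
      ρ.m ((j + p) + q) ((k + p) + q)) := by
    intro p q
    rw [hF]
    rw [abs_sqrt_term _ _ (mul_nonneg (Real.sqrt_nonneg _) (Real.sqrt_nonneg _)),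
      abs_sqrt_term _ _ (Real.sqrt_nonneg _)]
    ring
  have hslice : ∀ p, Summable (fun q => ‖F (p, q)‖) := by
    intro p
    have := (summable_abs_term h₂0 h₂1 ρ.m hρ (j + p) (k + p)).mul_left (w₁ p)
    exact this.congr (fun q => (hnorm p q).symm)
  have hFn : Summable (fun pq => ‖F pq‖) := by
    rw [summable_prod_of_nonneg (fun pq => norm_nonneg _)]
    refine ⟨hslice, ?_⟩
    apply Summable.of_nonneg_of_le (fun p => tsum_nonneg (fun q => norm_nonneg _))
      (fun p => ?_) ((summable_sqrt_pair h₁0 h₁1 j k).mul_right (1 / η₂))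
    calc (∑' q, ‖F (p, q)‖)
        = w₁ p * ∑' q, norm (((w₂ p q : ℝ) : ℂ) *
            ρ.m ((j + p) + q) ((k + p) + q)) := by
          rw [← tsum_mul_left]; exact tsum_congr (fun q => hnorm p q)
      _ ≤ w₁ p * (1 / η₂) := by
          apply mul_le_mul_of_nonneg_left _ (Real.sqrt_nonneg _)
          exact tsum_abs_term_le h₂0 h₂1 ρ.m hρ (j + p) (k + p)
  have hFsum : Summable F := hFn.of_norm
  have hFslice : ∀ p, Summable (fun q => F (p, q)) := fun p => (hslice p).of_norm
  -- G and the bijection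
  set G : ℕ × ℕ → ℂ := fun rp => if rp.2 ≤ rp.1 then
    (((rp.1.choose rp.2 : ℝ) * (η₂ * (1 - η₁)) ^ rp.2 * (1 - η₂) ^ (rp.1 - rp.2) * S rp.1
      : ℝ) : ℂ) * ρ.m (j + rp.1) (k + rp.1) else 0 with hG
  set e : ℕ × ℕ → ℕ × ℕ := fun pq => (pq.1 + pq.2, pq.1) with he
  have hinj : Function.Injective e := by
    intro x y hxy
    rw [he] at hxy
    simp only [Prod.mk.injEq] at hxy
    ext
    · omega
    · omega
  have hGe : ∀ pq : ℕ × ℕ, G (e pq) = F pq := by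
    rintro ⟨p, q⟩
    have ha1 : j + (p + q) = j + p + q := (Nat.add_assoc j p q).symm
    have ha2 : k + (p + q) = k + p + q := (Nat.add_assoc k p q).symm
    rw [hG, hF, he]
    simp only [hS, hw₁, hw₂, Nat.le_add_right, if_pos, Nat.add_sub_cancel_left, ha1, ha2]
    rw [sqrt_w_prod h₁0.le h₁1 h₂0.le h₂1 j k p q, ha1, ha2]
  have hsupp : ∀ x ∉ Set.range e, G x = 0 := by
    rintro ⟨r, p⟩ hx
    rcases le_or_gt p r with h | h
    · refine absurd ⟨(p, r - p), ?_⟩ hx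
      rw [he]
      have : p + (r - p) = r := by omega
      simp only [this]
    · rw [hG]; exact if_neg (by omega)
  have hGF : ∑' pq, F pq = ∑' pq, G pq := by
    rw [← hinj.tsum_eq (Function.support_subset_iff'.mpr hsupp)]
    exact tsum_congr (fun pq => (hGe pq).symm)
  have hGsum : Summable G := by
    rw [← hinj.summable_iff hsupp]
    exact hFsum.congr (fun pq => (hGe pq).symm)
  have hGslice : ∀ r, Summable (fun p => G (r, p)) := by
    intro r
    apply summable_of_ne_finset_zero (s := Finset.range (r + 1))
    intro p hp
    rw [hG]
    exact if_neg (by simp at hp; omega)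
  -- compute
  calc bernoulliMap η₁ (bernoulliMap η₂ ρ.m) j k
      = ∑' p, ∑' q, F (p, q) := by
        refine tsum_congr (fun p => ?_)
        have hq : ∀ q, F (p, q) = ((w₁ p : ℝ) : ℂ) *
            (((w₂ p q : ℝ) : ℂ) * ρ.m ((j + p) + q) ((k + p) + q)) := by
          intro q; rw [hF]; push_cast; ring
        rw [tsum_congr hq, tsum_mul_left]
        rfl
    _ = ∑' pq, F pq := (Summable.tsum_prod' hFsum hFslice).symm
    _ = ∑' pq, G pq := hGF
    _ = ∑' r, ∑' p, G (r, p) := Summable.tsum_prod' hGsum hGslice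
    _ = bernoulliMap (η₁ * η₂) ρ.m j k := by
        apply tsum_congr
        intro r
        rw [tsum_eq_sum (s := Finset.range (r + 1))
          (fun p hp => by rw [hG]; exact if_neg (by simp at hp; omega))]
        have hsum : ∑ p ∈ Finset.range (r + 1),
            (r.choose p : ℝ) * (η₂ * (1 - η₁)) ^ p * (1 - η₂) ^ (r - p)
            = (1 - η₁ * η₂) ^ r := by
          rw [show (1 - η₁ * η₂ : ℝ) = (η₂ * (1 - η₁)) + (1 - η₂) by ring, add_pow]
          exact Finset.sum_congr rfl (fun p _ => by ring)
        calc ∑ p ∈ Finset.range (r + 1), G (r, p)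
            = ∑ p ∈ Finset.range (r + 1),
              (((r.choose p : ℝ) * (η₂ * (1 - η₁)) ^ p * (1 - η₂) ^ (r - p) * S r : ℝ) : ℂ) *
                ρ.m (j + r) (k + r) := by
              apply Finset.sum_congr rfl
              intro p hp
              rw [hG]
              exact if_pos (by simp at hp; omega)
          _ = (((1 - η₁ * η₂) ^ r * S r : ℝ) : ℂ) * ρ.m (j + r) (k + r) := by
              rw [← Finset.sum_mul, ← Complex.ofReal_sum, ← Finset.sum_mul, hsum]
          _ = ((Real.sqrt (bernWeight (η₁ * η₂) j (j + r) * bernWeight (η₁ * η₂) k (k + r))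
              : ℝ) : ℂ) * ρ.m (j + r) (k + r) := by
              rw [sqrt_T hηη0.le hηη1 j k r, hS]

/-- semigroup property of the Bernoulli transformation: for
`η₁, η₂ ∈ (0,1]` and any infinite-dimensional density matrix `ρ`, all the
defining series converge absolutely and
`B(η₁)(B(η₂)ρ) = B(η₁η₂)ρ` entrywise. -/
theorem bernoulli_semigroup (η₁ η₂ : ℝ)
    (h₁ : η₁ ∈ Set.Ioc (0:ℝ) 1) (h₂ : η₂ ∈ Set.Ioc (0:ℝ) 1)
    (ρ : InfDensityMatrix) :
    (∀ j k : ℕ, Summable (fun p : ℕ =>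
      ‖(((Real.sqrt (bernWeight η₂ j (j + p) * bernWeight η₂ k (k + p)) : ℝ) : ℂ) *
        ρ.m (j + p) (k + p))‖)) ∧
    (∀ j k : ℕ, Summable (fun p : ℕ =>
      ‖(((Real.sqrt (bernWeight η₁ j (j + p) * bernWeight η₁ k (k + p)) : ℝ) : ℂ) *
        bernoulliMap η₂ ρ.m (j + p) (k + p))‖)) ∧
    (∀ j k : ℕ, Summable (fun p : ℕ =>
      ‖(((Real.sqrt (bernWeight (η₁ * η₂) j (j + p) *
          bernWeight (η₁ * η₂) k (k + p)) : ℝ) : ℂ) * ρ.m (j + p) (k + p))‖)) ∧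
    (∀ j k : ℕ, bernoulliMap η₁ (bernoulliMap η₂ ρ.m) j k =
      bernoulliMap (η₁ * η₂) ρ.m j k) := by
  obtain ⟨h₁0, h₁1⟩ := h₁
  obtain ⟨h₂0, h₂1⟩ := h₂
  have hρ : ∀ m n, norm (ρ.m m n) ≤ 1 := abs_entry_le_one ρ
  have hηη0 : 0 < η₁ * η₂ := mul_pos h₁0 h₂0
  have hηη1 : η₁ * η₂ ≤ 1 := mul_le_one₀ h₁1 h₂0.le h₂1
  have hB : ∀ m n, norm (bernoulliMap η₂ ρ.m m n) ≤ 1 / η₂ := fun m n =>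
    abs_bernoulliMap_le h₂0 h₂1 ρ.m hρ m n
  exact ⟨fun j k => summable_abs_term h₂0 h₂1 ρ.m hρ j k,
    fun j k => summable_abs_term h₁0 h₁1 (bernoulliMap η₂ ρ.m) hB j k,
    fun j k => summable_abs_term hηη0 hηη1 ρ.m hρ j k,
    fun j k => bern_semigroup_entry h₁0 h₁1 h₂0 h₂1 ρ j k⟩
end
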